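/- arXiv:2305.00227 — 4 statements merged into one kernel-verified Lean document; each statement's English description precedes it below -/
import Mathlib

section
/- Let c > 0, let g : ℝ → ℝ be continuously differentiable, and let a < α be real numbers such that g(a) = 0, g'(a) < 0, and ∫ₐ^s g(u) du < 0 for every s ∈ (a, α]. Then there exists a unique strictly increasing function ψ ∈ C²((−∞,0]) satisfying ψ''(z) + c² g(ψ(z)) = 0 for all z ≤ 0, ψ(0) = α, and lim_{z→−∞} ψ(z) = a. Moreover ψ'(z) > 0 for all z ≤ 0 and lim_{z→−∞} ψ'(z) = 0. -/
open Set Filter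

/-- `ψ` is a solution of the inner (transition-layer) problem
`ψ'' + c² g(ψ) = 0` on `(−∞,0]`, `ψ(0) = α`, `ψ(−∞) = a`,
with `ψ` strictly increasing and of class `C²` on `(−∞,0]`. -/
def IsInnerLayerSolution (c : ℝ) (g : ℝ → ℝ) (a α : ℝ) (ψ : ℝ → ℝ) : Prop :=
  ContDiffOn ℝ 2 ψ (Iic 0) ∧ StrictMonoOn ψ (Iic 0) ∧
  (∀ z ∈ Iic (0:ℝ),
    derivWithin (derivWithin ψ (Iic 0)) (Iic 0) z + c ^ 2 * g (ψ z) = 0) ∧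
  ψ 0 = α ∧ Tendsto ψ atBot (nhds a)

open intervalIntegral

set_option maxHeartbeats 1000000 in
lemma unique_aux (c a α : ℝ) (g G Z : ℝ → ℝ) (hc : 0 < c) (haα : a < α)
    (hGd : ∀ s, HasDerivAt G (g s) s) (hGa : G a = 0)
    (hGneg : ∀ s ∈ Ioc a α, G s < 0)
    (hZd : ∀ s ∈ Ioc a α, HasDerivAt Z (Real.sqrt (-(2*c^2) * G s))⁻¹ s)
    (hZα : Z α = 0)
    (ψ : ℝ → ℝ) (h : IsInnerLayerSolution c g a α ψ) :
    ∀ z ∈ Iic (0:ℝ), ψ z ∈ Ioc a α ∧ Z (ψ z) = z := by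
  obtain ⟨hC2, hmono, hode, hψ0, hlim⟩ := h
  set ψ' := derivWithin ψ (Iic 0) with hψ'def
  have hmonoOn : MonotoneOn ψ (Iic 0) := hmono.monotoneOn
  have hlow : ∀ z ∈ Iic (0:ℝ), a ≤ ψ z := by
    intro z hz
    refine le_of_tendsto hlim ?_
    filter_upwards [eventually_le_atBot z] with w hw
    rcases eq_or_lt_of_le hw with rfl | hlt
    · exact le_rfl
    · exact (hmono (hlt.le.trans hz) hz hlt).le
  have hmem : ∀ z ∈ Iic (0:ℝ), ψ z ∈ Ioc a α := by
    intro z hz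
    simp only [mem_Iic] at hz
    constructor
    · calc a ≤ ψ (z-1) := hlow _ (by simp only [mem_Iic]; linarith)
        _ < ψ z := hmono (by simp only [mem_Iic]; linarith) hz (by linarith)
    · calc ψ z ≤ ψ 0 := hmonoOn hz (by norm_num) hz
        _ = α := hψ0
  have hdiff : DifferentiableOn ℝ ψ (Iic 0) := hC2.differentiableOn (by norm_num)
  have hψ'C1 : ContDiffOn ℝ 1 ψ' (Iic 0) :=
    hC2.derivWithin (uniqueDiffOn_Iic 0) (by norm_num)
  have hψ'd : ∀ z ∈ Iic (0:ℝ), HasDerivWithinAt ψ (ψ' z) (Iic 0) z := fun z hz =>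
    (hdiff z hz).hasDerivWithinAt
  -- ψ' ≥ 0
  have hψ'nonneg : ∀ z ∈ Iic (0:ℝ), 0 ≤ ψ' z := by
    intro z hz
    have hd := hψ'd z hz
    rw [hasDerivWithinAt_iff_tendsto_slope] at hd
    have hsub : Iio z ⊆ Iic (0:ℝ) \ {z} := by
      intro y hy
      simp only [mem_Iio] at hy
      simp only [mem_Iic] at hz
      exact ⟨by simp only [mem_Iic]; linarith, by simp [ne_of_lt hy]⟩
    have hd' : Tendsto (slope ψ z) (nhdsWithin z (Iio z)) (nhds (ψ' z)) :=
      hd.mono_left (nhdsWithin_mono z hsub)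
    refine ge_of_tendsto hd' ?_
    filter_upwards [self_mem_nhdsWithin] with y hy
    simp only [mem_Iio] at hy
    rw [slope_def_field]
    have hnum : ψ y - ψ z ≤ 0 := by
      simp only [mem_Iic] at hz
      exact sub_nonpos.2 (hmonoOn (by simp only [mem_Iic]; linarith) hz hy.le)
    have hden : y - z < 0 := by linarith
    have := div_nonneg (neg_nonneg.2 hnum) (neg_nonneg.2 hden.le)
    rwa [neg_div_neg_eq] at this
  -- energy identity
  set E : ℝ → ℝ := fun w => ψ' w ^ 2 + 2*c^2 * G (ψ w) with hEdef
  have hEd : ∀ w ∈ Iic (0:ℝ), HasDerivWithinAt E 0 (Iic 0) w := by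
    intro w hw
    have h1 : HasDerivWithinAt ψ' (derivWithin ψ' (Iic 0) w) (Iic 0) w :=
      ((hψ'C1.differentiableOn one_ne_zero) w hw).hasDerivWithinAt
    have h2 := hψ'd w hw
    have h3 : HasDerivWithinAt (fun y => ψ' y ^ 2)
        ((2:ℝ) * ψ' w ^ 1 * derivWithin ψ' (Iic 0) w) (Iic 0) w := h1.pow 2
    have h4 : HasDerivWithinAt (fun y => G (ψ y)) (g (ψ w) * ψ' w) (Iic 0) w :=
      (hGd (ψ w)).comp_hasDerivWithinAt w h2
    have h5 := h3.add (h4.const_mul (2*c^2))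
    have hODE := hode w hw
    have hval : derivWithin ψ' (Iic 0) w = -(c^2 * g (ψ w)) := by linarith
    refine h5.congr_deriv ?_
    rw [hval]; ring
  have henergy : ∀ z ∈ Iic (0:ℝ), E z = E 0 := by
    intro z hz
    simp only [mem_Iic] at hz
    rcases eq_or_lt_of_le hz with rfl | hz0
    · rfl
    · have hdiffE : DifferentiableOn ℝ E (Icc z 0) := fun x hx =>
        ((hEd x (Icc_subset_Iic_self hx)).differentiableWithinAt).mono Icc_subset_Iic_self
      have hder0 : ∀ x ∈ Ico z 0, derivWithin E (Icc z 0) x = 0 := fun x hx =>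
        ((hEd x (Icc_subset_Iic_self (Ico_subset_Icc_self hx))).mono
          Icc_subset_Iic_self).derivWithin ((uniqueDiffOn_Icc hz0) x (Ico_subset_Icc_self hx))
      have := constant_of_derivWithin_zero hdiffE hder0 0 (right_mem_Icc.2 hz0.le)
      exact this.symm
  -- the constant K is zero
  set K : ℝ := E 0 with hKdef
  have hid : ∀ z ∈ Iic (0:ℝ), ψ' z ^ 2 = K - 2*c^2 * G (ψ z) := by
    intro z hz
    have := henergy z hz
    simp only [hEdef] at this
    linarith
  have hGlim : Tendsto (fun z => G (ψ z)) atBot (nhds 0) := by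
    have := ((hGd a).continuousAt.tendsto).comp hlim
    rwa [hGa] at this
  have hsq : Tendsto (fun z => ψ' z ^ 2) atBot (nhds K) := by
    have h2 : Tendsto (fun z => K - 2*c^2 * G (ψ z)) atBot (nhds (K - 2*c^2 * 0)) :=
      tendsto_const_nhds.sub (hGlim.const_mul _)
    rw [mul_zero, sub_zero] at h2
    refine h2.congr' ?_
    filter_upwards [eventually_le_atBot (0:ℝ)] with z hz
    exact (hid z (mem_Iic.2 hz)).symm
  have hK0 : 0 ≤ K := ge_of_tendsto hsq (by
    filter_upwards with z using sq_nonneg _)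
  have hKzero : K = 0 := by
    by_contra hne
    have hKpos : 0 < K := lt_of_le_of_ne hK0 (Ne.symm hne)
    have hsK : 0 < Real.sqrt K := Real.sqrt_pos.2 hKpos
    have hsqrt : Tendsto ψ' atBot (nhds (Real.sqrt K)) := by
      have h1 : Tendsto (fun z => Real.sqrt (ψ' z ^ 2)) atBot (nhds (Real.sqrt K)) :=
        (Real.continuous_sqrt.tendsto K).comp hsq
      refine h1.congr' ?_
      filter_upwards [eventually_le_atBot (0:ℝ)] with z hz
      exact Real.sqrt_sq (hψ'nonneg z (mem_Iic.2 hz))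
    have hhalf : ∀ᶠ z in atBot, Real.sqrt K / 2 < ψ' z :=
      hsqrt.eventually (eventually_gt_nhds (by linarith))
    obtain ⟨M₀, hM₀⟩ := eventually_atBot.1 hhalf
    set M : ℝ := min M₀ (-1) with hMdef
    have hMneg : M < 0 := lt_of_le_of_lt (min_le_right _ _) (by norm_num)
    have hM : ∀ z ≤ M, Real.sqrt K / 2 < ψ' z := fun z hz =>
      hM₀ z (le_trans hz (min_le_left _ _))
    -- mean value estimate
    have key : ∀ z < M, Real.sqrt K / 2 * (M - z) ≤ ψ M - ψ z := by
      intro z hzM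
      have hIccIic : Icc z M ⊆ Iic (0:ℝ) := fun x hx =>
        mem_Iic.2 (le_trans hx.2 hMneg.le)
      have hcont : ContinuousOn ψ (Icc z M) := (hC2.continuousOn).mono hIccIic
      have hint : interior (Icc z M) = Ioo z M := interior_Icc
      have hdaux : ∀ x ∈ interior (Icc z M), DifferentiableAt ℝ ψ x := by
        intro x hx
        rw [hint] at hx
        have hx0 : x < 0 := lt_of_lt_of_le hx.2 hMneg.le
        exact (hdiff x (mem_Iic.2 hx0.le)).differentiableAt (Iic_mem_nhds hx0)
      have hd' : DifferentiableOn ℝ ψ (interior (Icc z M)) := fun x hx =>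
        (hdaux x hx).differentiableWithinAt
      have hbound : ∀ x ∈ interior (Icc z M), Real.sqrt K / 2 ≤ deriv ψ x := by
        intro x hx
        rw [hint] at hx
        have hx0 : x < 0 := lt_of_lt_of_le hx.2 hMneg.le
        have : deriv ψ x = ψ' x := (derivWithin_of_mem_nhds (Iic_mem_nhds hx0)).symm
        rw [this]
        exact (hM x hx.2.le).le
      exact (convex_Icc z M).mul_sub_le_image_sub_of_le_deriv hcont hd' hbound
        z (left_mem_Icc.2 hzM.le) M (right_mem_Icc.2 hzM.le) hzM.le
    -- contradiction
    set z : ℝ := M - (α - a) / (Real.sqrt K / 2) - 1 with hzdef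
    have hzM : z < M := by
      have : 0 < (α - a) / (Real.sqrt K / 2) := div_pos (by linarith) (by linarith)
      simp only [hzdef]; linarith
    have h1 := key z hzM
    have h2 : ψ M - ψ z < α - a := by
      have hMa : ψ M ≤ α := by
        calc ψ M ≤ ψ 0 := hmonoOn (mem_Iic.2 hMneg.le) (by norm_num) hMneg.le
          _ = α := hψ0
      have hza : a < ψ z := (hmem z (mem_Iic.2 (by linarith))).1
      linarith
    have h3 : Real.sqrt K / 2 * (M - z) = (α - a) + Real.sqrt K / 2 := by
      simp only [hzdef]
      field_simp
      ring
    rw [h3] at h1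
    linarith
  -- first order ODE
  have hfirst : ∀ z ∈ Iic (0:ℝ), ψ' z = Real.sqrt (-(2*c^2) * G (ψ z)) := by
    intro z hz
    have h1 := hid z hz
    rw [hKzero] at h1
    have h2 : -(2*c^2) * G (ψ z) = ψ' z ^ 2 := by linarith
    rw [h2, Real.sqrt_sq (hψ'nonneg z hz)]
  -- Z ∘ ψ − id is constant
  set h : ℝ → ℝ := fun w => Z (ψ w) - w with hhdef
  have hhd : ∀ w ∈ Iic (0:ℝ), HasDerivWithinAt h 0 (Iic 0) w := by
    intro w hw
    have hmemw := hmem w hw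
    have hFpos : 0 < -(2*c^2) * G (ψ w) := by
      have h2c : 0 < 2*c^2 := by positivity
      have h3 := mul_pos h2c (neg_pos.2 (hGneg _ hmemw))
      nlinarith [h3]
    have hsne : Real.sqrt (-(2*c^2) * G (ψ w)) ≠ 0 :=
      ne_of_gt (Real.sqrt_pos.2 hFpos)
    have h1 : HasDerivAt Z (Real.sqrt (-(2*c^2) * G (ψ w)))⁻¹ (ψ w) := hZd _ hmemw
    have h2 := hψ'd w hw
    have h3 : HasDerivWithinAt (fun y => Z (ψ y))
        ((Real.sqrt (-(2*c^2) * G (ψ w)))⁻¹ * ψ' w) (Iic 0) w :=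
      h1.comp_hasDerivWithinAt w h2
    have h4 := h3.sub (hasDerivWithinAt_id w (Iic 0))
    have h5 : (Real.sqrt (-(2*c^2) * G (ψ w)))⁻¹ * ψ' w - 1 = 0 := by
      rw [hfirst w hw, inv_mul_cancel₀ hsne]; ring
    rw [h5] at h4
    exact h4
  have hhconst : ∀ z ∈ Iic (0:ℝ), h z = h 0 := by
    intro z hz
    simp only [mem_Iic] at hz
    rcases eq_or_lt_of_le hz with rfl | hz0
    · rfl
    · have hdiffh : DifferentiableOn ℝ h (Icc z 0) := fun x hx =>
        ((hhd x (Icc_subset_Iic_self hx)).differentiableWithinAt).mono Icc_subset_Iic_self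
      have hder0 : ∀ x ∈ Ico z 0, derivWithin h (Icc z 0) x = 0 := fun x hx =>
        ((hhd x (Icc_subset_Iic_self (Ico_subset_Icc_self hx))).mono
          Icc_subset_Iic_self).derivWithin ((uniqueDiffOn_Icc hz0) x (Ico_subset_Icc_self hx))
      exact (constant_of_derivWithin_zero hdiffh hder0 0 (right_mem_Icc.2 hz0.le)).symm
  intro z hz
  refine ⟨hmem z hz, ?_⟩
  have := hhconst z hz
  simp only [hhdef, hψ0, hZα, sub_zero] at this
  linarith
set_option maxHeartbeats 1000000 in
/-- Existence and uniqueness of the inner layer profile: if `g(a) = 0`,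
`g'(a) < 0` and `∫ₐ^s g < 0` for all `s ∈ (a,α]`, then there is a unique
strictly increasing `C²` solution of `ψ'' + c² g(ψ) = 0` on `(−∞,0]` with
`ψ(0) = α` and `ψ(−∞) = a`; moreover `ψ' > 0` on `(−∞,0]` and `ψ'(−∞) = 0`. -/
theorem inner_layer_exists_unique
    (c : ℝ) (hc : 0 < c) (g : ℝ → ℝ) (hg : ContDiff ℝ 1 g)
    (a α : ℝ) (haα : a < α) (hga : g a = 0) (hg'a : deriv g a < 0)
    (hgint : ∀ s ∈ Ioc a α, (∫ u in a..s, g u) < 0) :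
    (∃ ψ : ℝ → ℝ, IsInnerLayerSolution c g a α ψ ∧
      (∀ z ∈ Iic (0:ℝ), 0 < derivWithin ψ (Iic 0) z) ∧
      Tendsto (derivWithin ψ (Iic 0)) atBot (nhds 0)) ∧
    (∀ ψ₁ ψ₂ : ℝ → ℝ, IsInnerLayerSolution c g a α ψ₁ →
      IsInnerLayerSolution c g a α ψ₂ → EqOn ψ₁ ψ₂ (Iic 0)) := by
  classical
  have hgc : Continuous g := hg.continuous
  set G : ℝ → ℝ := fun s => ∫ u in a..s, g u with hGdef
  have hGd : ∀ s, HasDerivAt G (g s) s := fun s =>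
    integral_hasDerivAt_right (hgc.intervalIntegrable a s)
      hgc.stronglyMeasurable.stronglyMeasurableAtFilter hgc.continuousAt
  have hGa : G a = 0 := integral_same
  have hGc : Continuous G := continuous_iff_continuousAt.2 fun s => (hGd s).continuousAt
  have hGneg : ∀ s ∈ Ioc a α, G s < 0 := fun s hs => hgint s hs
  set F : ℝ → ℝ := fun s => -(2*c^2) * G s with hFdef
  have hFd : ∀ s, HasDerivAt F (-(2*c^2) * g s) s := fun s => (hGd s).const_mul _
  have hFc : Continuous F := continuous_const.mul hGc
  have h2c : (0:ℝ) < 2*c^2 := by positivity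
  have hFpos : ∀ s ∈ Ioc a α, 0 < F s := by
    intro s hs
    have h3 := mul_pos h2c (neg_pos.2 (hGneg s hs))
    simp only [hFdef]; nlinarith [h3]
  have hFa : F a = 0 := by simp only [hFdef, hGa, mul_zero]
  -- choose b > α with F > 0 on Ioc a b
  have hFα : 0 < F α := hFpos α ⟨haα, le_rfl⟩
  have hev : ∀ᶠ s in nhds α, 0 < F s :=
    hFc.continuousAt.eventually (eventually_gt_nhds hFα)
  obtain ⟨ε, hε, hball⟩ := Metric.eventually_nhds_iff_ball.1 hev
  set b : ℝ := α + ε/2 with hbdef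
  have hαb : α < b := by simp only [hbdef]; linarith
  have hab : a < b := haα.trans hαb
  have hbB : ∀ s ∈ Ioc a b, 0 < F s := by
    intro s hs
    rcases le_or_gt s α with h | h
    · exact hFpos s ⟨hs.1, h⟩
    · apply hball
      rw [Metric.mem_ball, Real.dist_eq, abs_of_pos (by linarith)]
      have := hs.2
      simp only [hbdef] at this
      linarith
  set V : ℝ → ℝ := fun u => (Real.sqrt (F u))⁻¹ with hVdef
  have hVpos : ∀ s ∈ Ioc a b, 0 < V s := fun s hs =>
    inv_pos.2 (Real.sqrt_pos.2 (hbB s hs))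
  have hVca : ∀ s ∈ Ioc a b, ContinuousAt V s := fun s hs =>
    ((Real.continuous_sqrt.comp hFc).continuousAt).inv₀
      (ne_of_gt (Real.sqrt_pos.2 (hbB s hs)))
  have hαmem : α ∈ Ioc a b := ⟨haα, hαb.le⟩
  have hVint : ∀ s₁ ∈ Ioc a b, ∀ s₂ ∈ Ioc a b, IntervalIntegrable V MeasureTheory.volume s₁ s₂ := by
    intro s₁ h₁ s₂ h₂
    apply ContinuousOn.intervalIntegrable
    intro x hx
    exact (hVca x ((ordConnected_Ioc.uIcc_subset h₁ h₂) hx)).continuousWithinAt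
  set Z : ℝ → ℝ := fun s => ∫ u in α..s, V u with hZdef
  have hZd : ∀ s ∈ Ioc a b, HasDerivAt Z (V s) s := fun s hs =>
    integral_hasDerivAt_right (hVint α hαmem s hs)
      (((Real.continuous_sqrt.comp hFc).measurable.inv).stronglyMeasurable.stronglyMeasurableAtFilter)
      (hVca s hs)
  have hZα : Z α = 0 := integral_same
  have hZcont : ContinuousOn Z (Ioc a b) := fun s hs =>
    ((hZd s hs).continuousAt).continuousWithinAt
  have hZmono : StrictMonoOn Z (Ioc a b) := by
    apply strictMonoOn_of_deriv_pos (convex_Ioc a b) hZcont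
    intro x hx
    rw [interior_Ioc] at hx
    rw [(hZd x (Ioo_subset_Ioc_self hx)).deriv]
    exact hVpos x (Ioo_subset_Ioc_self hx)
  -- divergence of Z near a
  have hg' : Continuous (deriv g) := hg.continuous_deriv le_rfl
  set L : ℝ := |deriv g a| + 1 with hLdef
  have hLpos : 0 < L := by positivity
  have hev2 : ∀ᶠ u in nhds a, |deriv g u| < L := by
    have hca : ContinuousAt (fun u => |deriv g u|) a := (hg'.abs).continuousAt
    exact hca.eventually (eventually_lt_nhds (by simp only [hLdef]; linarith))
  obtain ⟨δ₀, hδ₀, hδball⟩ := Metric.eventually_nhds_iff_ball.1 hev2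
  set δ : ℝ := min (δ₀/2) (α - a) with hδdef
  have hδpos : 0 < δ := lt_min (by linarith) (by linarith)
  set d : ℝ := a + δ with hddef
  have hdmem : d ∈ Ioc a α := ⟨by simp only [hddef]; linarith,
    by simp only [hddef, hδdef]; have := min_le_right (δ₀/2) (α - a); linarith⟩
  have hdb : d ∈ Ioc a b := ⟨hdmem.1, hdmem.2.trans hαb.le⟩
  -- |g u| ≤ L (u - a) on [a, d]
  have hgb : ∀ u ∈ Icc a d, |g u| ≤ L * (u - a) := by
    intro u hu
    have hder : ∀ x ∈ Icc a d, HasDerivWithinAt g (deriv g x) (Icc a d) x := fun x _ =>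
      ((hg.differentiable one_ne_zero).differentiableAt.hasDerivAt).hasDerivWithinAt
    have hbound : ∀ x ∈ Icc a d, ‖deriv g x‖ ≤ L := by
      intro x hx
      have hxball : x ∈ Metric.ball a δ₀ := by
        rw [Metric.mem_ball, Real.dist_eq]
        have h1 := hx.1; have h2 := hx.2
        have hδle : δ ≤ δ₀/2 := min_le_left _ _
        rw [abs_of_nonneg (by linarith)]
        simp only [hddef] at h2; linarith
      exact (le_of_lt (hδball _ hxball))
    have := Convex.norm_image_sub_le_of_norm_hasDerivWithin_le hder hbound
      (convex_Icc a d) (left_mem_Icc.2 (by simp only [hddef]; linarith)) hu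
    rw [hga, sub_zero] at this
    rwa [Real.norm_eq_abs, Real.norm_eq_abs, abs_of_nonneg (by linarith [hu.1] : (0:ℝ) ≤ u - a)] at this
  -- |G u| ≤ L (u-a)^2 on [a, d]
  have hGb : ∀ u ∈ Icc a d, |G u| ≤ L * (u - a) * (u - a) := by
    intro u hu
    have hnorm : ∀ x ∈ uIoc a u, ‖g x‖ ≤ L * (u - a) := by
      intro x hx
      rw [uIoc_of_le hu.1] at hx
      have hxd : x ∈ Icc a d := ⟨hx.1.le, hx.2.trans hu.2⟩
      calc ‖g x‖ = |g x| := rfl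
        _ ≤ L * (x - a) := hgb x hxd
        _ ≤ L * (u - a) := by nlinarith [hx.2, hLpos]
    have := intervalIntegral.norm_integral_le_of_norm_le_const hnorm
    rw [abs_of_nonneg (by linarith [hu.1] : (0:ℝ) ≤ u - a)] at this
    exact this
  set c₀ : ℝ := Real.sqrt (2*c^2*L) with hc₀def
  have hc₀pos : 0 < c₀ := Real.sqrt_pos.2 (by positivity)
  -- lower bound for V
  have hVlb : ∀ u ∈ Ioc a d, (c₀ * (u - a))⁻¹ ≤ V u := by
    intro u hu
    have hua : 0 < u - a := by linarith [hu.1]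
    have hFu : F u ≤ 2*c^2*L * (u - a)^2 := by
      have h1 : F u ≤ 2*c^2 * |G u| := by
        simp only [hFdef]
        have := abs_nonneg (G u)
        nlinarith [neg_abs_le (G u), h2c]
      have h2 := hGb u ⟨hu.1.le, hu.2⟩
      nlinarith [h2c]
    have hsq : Real.sqrt (F u) ≤ c₀ * (u - a) := by
      have : Real.sqrt (F u) ≤ Real.sqrt (2*c^2*L * (u - a)^2) :=
        Real.sqrt_le_sqrt hFu
      rwa [Real.sqrt_mul (by positivity) ((u-a)^2), Real.sqrt_sq hua.le, ← hc₀def] at this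
    have hFupos : 0 < F u := hFpos u ⟨hu.1, hu.2.trans hdmem.2⟩
    have hsqpos : 0 < Real.sqrt (F u) := Real.sqrt_pos.2 hFupos
    simp only [hVdef]
    exact inv_anti₀ hsqpos hsq
  -- the comparison estimate
  have hcomp : ∀ s ∈ Ioo a d, Z s ≤ Z d - c₀⁻¹ * Real.log (δ / (s - a)) := by
    intro s hs
    have hsa : 0 < s - a := by linarith [hs.1]
    have hsd : s < d := hs.2
    have hsmem : s ∈ Ioc a b := ⟨hs.1, hsd.le.trans hdb.2⟩
    have hint1 : IntervalIntegrable V MeasureTheory.volume s d := hVint s hsmem d hdb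
    have hsplit : Z d - Z s = ∫ u in s..d, V u := by
      simp only [hZdef]
      exact integral_interval_sub_left (hVint α hαmem d hdb) (hVint α hαmem s hsmem)
    have hint2 : IntervalIntegrable (fun u => (c₀ * (u - a))⁻¹) MeasureTheory.volume s d := by
      apply ContinuousOn.intervalIntegrable
      intro x hx
      rw [uIcc_of_le hsd.le] at hx
      have : c₀ * (x - a) ≠ 0 := by
        have : 0 < x - a := by linarith [hx.1]
        positivity
      exact ((continuous_const.mul (continuous_id.sub continuous_const)).continuousAt.inv₀
        this).continuousWithinAt
    have hmono : (∫ u in s..d, (c₀ * (u - a))⁻¹) ≤ ∫ u in s..d, V u := by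
      apply intervalIntegral.integral_mono_on hsd.le hint2 hint1
      intro x hx
      exact hVlb x ⟨lt_of_lt_of_le hs.1 hx.1, hx.2⟩
    have hcalc : (∫ u in s..d, (c₀ * (u - a))⁻¹) = c₀⁻¹ * Real.log (δ / (s - a)) := by
      have e1 : ∀ u, (c₀ * (u - a))⁻¹ = c₀⁻¹ * (u - a)⁻¹ := fun u => by
        rw [mul_inv]
      simp_rw [e1]
      rw [intervalIntegral.integral_const_mul]
      congr 1
      have e2 : (∫ u in s..d, (u - a)⁻¹) = ∫ x in (s - a)..(d - a), x⁻¹ := by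
        exact (intervalIntegral.integral_comp_sub_right (fun x => x⁻¹) a)
      rw [e2, integral_inv (by
        rw [uIcc_of_le (by linarith [hsd] : s - a ≤ d - a)]
        intro hmem0
        have := hmem0.1
        linarith)]
      congr 1
      simp only [hddef]
      ring_nf
    rw [hcalc] at hmono
    linarith [hsplit, hmono]
  have hZunbdd : ∀ M : ℝ, ∃ s ∈ Ioc a α, Z s < M := by
    intro M
    set X : ℝ := max 1 (c₀ * (Z d - M) + 1) with hXdef
    have hX1 : 1 ≤ X := le_max_left _ _
    set s : ℝ := a + δ * Real.exp (-X) with hsdef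
    have hexp : Real.exp (-X) < 1 := by
      rw [Real.exp_lt_one_iff]; linarith
    have hexppos : 0 < Real.exp (-X) := Real.exp_pos _
    have hsIoo : s ∈ Ioo a d := by
      constructor
      · simp only [hsdef]; nlinarith
      · simp only [hsdef, hddef]; nlinarith
    have hsmemα : s ∈ Ioc a α := ⟨hsIoo.1, (hsIoo.2.le).trans hdmem.2⟩
    refine ⟨s, hsmemα, ?_⟩
    have hlog : Real.log (δ / (s - a)) = X := by
      have hsa' : s - a = δ * Real.exp (-X) := by simp only [hsdef]; ring
      have hratio : δ / (s - a) = Real.exp X := by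
        rw [hsa', Real.exp_neg]
        field_simp
      rw [hratio, Real.log_exp]
    have := hcomp s hsIoo
    rw [hlog] at this
    have hXge : c₀ * (Z d - M) + 1 ≤ X := le_max_right _ _
    have hc₀inv : 0 < c₀⁻¹ := inv_pos.2 hc₀pos
    have : Z s ≤ Z d - c₀⁻¹ * X := this
    have h2 : c₀⁻¹ * (c₀ * (Z d - M) + 1) ≤ c₀⁻¹ * X :=
      mul_le_mul_of_nonneg_left hXge hc₀inv.le
    have h3 : c₀⁻¹ * (c₀ * (Z d - M) + 1) = (Z d - M) + c₀⁻¹ := by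
      field_simp
    linarith [this, h2, h3, hc₀inv]
  -- surjectivity and the inverse function ψ
  have hZbpos : 0 < Z b := by
    have := hZmono hαmem ⟨hab, le_rfl⟩ hαb
    rwa [hZα] at this
  have hsurj : ∀ z ≤ Z b, ∃ s ∈ Ioc a b, Z s = z := by
    intro z hz
    obtain ⟨s₀, hs₀, hZs₀⟩ := hZunbdd (min z 0)
    have hs₀b : s₀ ∈ Ioc a b := ⟨hs₀.1, hs₀.2.trans hαb.le⟩
    have hsub : Icc s₀ b ⊆ Ioc a b := fun x hx => ⟨lt_of_lt_of_le hs₀.1 hx.1, hx.2⟩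
    have hs₀leb : s₀ ≤ b := hs₀.2.trans hαb.le
    have hzmem : z ∈ Icc (Z s₀) (Z b) := ⟨(hZs₀.le).trans (min_le_left _ _), hz⟩
    obtain ⟨s, hsmem, hZs⟩ := intermediate_value_Icc hs₀leb (hZcont.mono hsub) hzmem
    exact ⟨s, hsub hsmem, hZs⟩
  set ψ : ℝ → ℝ := fun z => if h : ∃ s ∈ Ioc a b, Z s = z then h.choose else α with hψdef
  have hψspec : ∀ z ≤ Z b, ψ z ∈ Ioc a b ∧ Z (ψ z) = z := by
    intro z hz
    have hex := hsurj z hz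
    simp only [hψdef, dif_pos hex]
    exact hex.choose_spec
  have hZinj : InjOn Z (Ioc a b) := hZmono.injOn
  have hZmonoOn : MonotoneOn Z (Ioc a b) := hZmono.monotoneOn
  have hψZ : ∀ s ∈ Ioc a b, ψ (Z s) = s := by
    intro s hs
    have hle : Z s ≤ Z b := hZmonoOn hs ⟨hab, le_rfl⟩ hs.2
    exact hZinj (hψspec (Z s) hle).1 hs (hψspec (Z s) hle).2
  have hψ0 : ψ 0 = α := by rw [← hZα]; exact hψZ α hαmem
  have hψmono : StrictMonoOn ψ (Iic (Z b)) := by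
    intro z₁ h1 z₂ h2 hlt
    by_contra hle
    push_neg at hle
    have := hZmonoOn (hψspec z₂ h2).1 (hψspec z₁ h1).1 hle
    rw [(hψspec z₁ h1).2, (hψspec z₂ h2).2] at this
    linarith
  have hIicU : Iic (0:ℝ) ⊆ Iio (Z b) := fun z hz => lt_of_le_of_lt hz hZbpos
  have hmemIoo : ∀ z < Z b, ψ z ∈ Ioo a b := by
    intro z hz
    refine ⟨(hψspec z hz.le).1.1, ?_⟩
    have := hψmono (mem_Iic.2 hz.le) (mem_Iic.2 le_rfl) hz
    rwa [hψZ b ⟨hab, le_rfl⟩] at this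
  have hψcont : ∀ z < Z b, ContinuousAt ψ z := by
    intro z hz
    apply StrictMonoOn.continuousAt_of_image_mem_nhds hψmono (Iic_mem_nhds hz)
    have himg : Ioc a b ⊆ ψ '' (Iic (Z b)) := by
      intro s hs
      exact ⟨Z s, mem_Iic.2 (hZmonoOn hs ⟨hab, le_rfl⟩ hs.2), hψZ s hs⟩
    exact mem_of_superset (Ioo_mem_nhds (hmemIoo z hz).1 (hmemIoo z hz).2)
      (Ioo_subset_Ioc_self.trans himg)
  set W : ℝ → ℝ := fun z => Real.sqrt (F (ψ z)) with hWdef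
  have hWpos : ∀ z < Z b, 0 < W z := fun z hz =>
    Real.sqrt_pos.2 (hbB _ (hψspec z hz.le).1)
  have hψd : ∀ z < Z b, HasDerivAt ψ (W z) z := by
    intro z hz
    have h1 : HasDerivAt Z (V (ψ z)) (ψ z) := hZd _ (hψspec z hz.le).1
    have h2 : V (ψ z) ≠ 0 := ne_of_gt (hVpos _ (hψspec z hz.le).1)
    have h3 : ∀ᶠ y in nhds z, Z (ψ y) = y := by
      filter_upwards [Iio_mem_nhds hz] with y hy
      exact (hψspec y (le_of_lt hy)).2
    have h4 := HasDerivAt.of_local_left_inverse (hψcont z hz) h1 h2 h3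
    have h5 : (V (ψ z))⁻¹ = W z := by simp only [hVdef, hWdef, inv_inv]
    rwa [h5] at h4
  have hWd : ∀ z < Z b, HasDerivAt W (-(c^2) * g (ψ z)) z := by
    intro z hz
    have hFψ : 0 < F (ψ z) := hbB _ (hψspec z hz.le).1
    have h1 : HasDerivAt (fun y => F (ψ y)) (-(2*c^2) * g (ψ z) * W z) z :=
      (hFd (ψ z)).comp z (hψd z hz)
    have h2 : HasDerivAt (fun y => Real.sqrt (F (ψ y)))
        (1/(2*Real.sqrt (F (ψ z))) * (-(2*c^2) * g (ψ z) * W z)) z :=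
      (Real.hasDerivAt_sqrt (ne_of_gt hFψ)).comp z h1
    have hWne : W z ≠ 0 := ne_of_gt (hWpos z hz)
    have heq : 1/(2*Real.sqrt (F (ψ z))) * (-(2*c^2) * g (ψ z) * W z) = -(c^2) * g (ψ z) := by
      have hWeq : Real.sqrt (F (ψ z)) = W z := rfl
      rw [hWeq]
      field_simp
    rw [heq] at h2
    exact h2
  -- regularity of ψ
  have hopen : IsOpen (Iio (Z b)) := isOpen_Iio
  have hψdiffOn : DifferentiableOn ℝ ψ (Iio (Z b)) := fun x hx =>
    (hψd x hx).differentiableAt.differentiableWithinAt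
  have hψcOn : ContinuousOn ψ (Iio (Z b)) := fun x hx => (hψcont x hx).continuousWithinAt
  have hW'cOn : ContinuousOn (fun z => -(c^2) * g (ψ z)) (Iio (Z b)) :=
    continuousOn_const.mul (hgc.comp_continuousOn hψcOn)
  have hWC1 : ContDiffOn ℝ 1 W (Iio (Z b)) := by
    rw [show (1 : WithTop ℕ∞) = 0 + 1 by norm_num, contDiffOn_succ_iff_deriv_of_isOpen hopen]
    refine ⟨fun x hx => (hWd x hx).differentiableAt.differentiableWithinAt, by simp, ?_⟩
    rw [contDiffOn_zero]
    exact hW'cOn.congr (fun x hx => (hWd x hx).deriv)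
  have hψC2 : ContDiffOn ℝ 2 ψ (Iio (Z b)) := by
    rw [show (2 : WithTop ℕ∞) = 1 + 1 by norm_num, contDiffOn_succ_iff_deriv_of_isOpen hopen]
    refine ⟨hψdiffOn, by simp, ?_⟩
    exact hWC1.congr (fun x hx => (hψd x hx).deriv)
  have hdW : ∀ z ∈ Iic (0:ℝ), derivWithin ψ (Iic 0) z = W z := fun z hz =>
    ((hψd z (hIicU hz)).hasDerivWithinAt).derivWithin (uniqueDiffOn_Iic 0 z hz)
  -- limit of ψ at -∞
  have hψlim : Tendsto ψ atBot (nhds a) := by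
    rw [tendsto_order]
    constructor
    · intro a' ha'
      filter_upwards [eventually_le_atBot (0:ℝ)] with z hz
      exact lt_trans ha' (hψspec z (hz.trans hZbpos.le)).1.1
    · intro a' ha'
      have hmin : a < min a' α := lt_min ha' haα
      set t : ℝ := (a + min a' α)/2 with htdef
      have hta : a < t := by simp only [htdef]; linarith
      have htmin : t < min a' α := by simp only [htdef]; linarith
      have htmem : t ∈ Ioc a b := ⟨hta, by
        have h2 : min a' α ≤ α := min_le_right _ _
        linarith [hαb]⟩
      filter_upwards [eventually_lt_atBot (min 0 (Z t))] with z hz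
      have hz0 : z < 0 := lt_of_lt_of_le hz (min_le_left _ _)
      have hzt : z < Z t := lt_of_lt_of_le hz (min_le_right _ _)
      have hzZb : z ≤ Z b := by linarith [hZbpos]
      have hψz : ψ z < t := by
        by_contra hge
        push_neg at hge
        have := hZmonoOn htmem (hψspec z hzZb).1 hge
        rw [(hψspec z hzZb).2] at this
        linarith
      have : t < a' := lt_of_lt_of_le htmin (min_le_left _ _)
      linarith
  constructor
  · refine ⟨ψ, ⟨hψC2.mono (fun z hz => hIicU hz),
      hψmono.mono (fun z hz => mem_Iic.2 (le_trans hz hZbpos.le)), ?_, hψ0, hψlim⟩, ?_, ?_⟩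
    · intro z hz
      have e1 : derivWithin (derivWithin ψ (Iic 0)) (Iic 0) z = derivWithin W (Iic 0) z :=
        derivWithin_congr hdW (hdW z hz)
      have e2 : derivWithin W (Iic 0) z = -(c^2) * g (ψ z) :=
        ((hWd z (hIicU hz)).hasDerivWithinAt).derivWithin (uniqueDiffOn_Iic 0 z hz)
      rw [e1, e2]; ring
    · intro z hz
      rw [hdW z hz]
      exact hWpos z (hIicU hz)
    · have hWlim : Tendsto W atBot (nhds 0) := by
        have h1 : Tendsto (fun z => Real.sqrt (F (ψ z))) atBot (nhds (Real.sqrt (F a))) :=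
          ((Real.continuous_sqrt.comp hFc).continuousAt.tendsto).comp hψlim
        rw [hFa, Real.sqrt_zero] at h1
        exact h1
      refine Tendsto.congr' ?_ hWlim
      filter_upwards [eventually_le_atBot (0:ℝ)] with z hz
      exact (hdW z (mem_Iic.2 hz)).symm
  · intro ψ₁ ψ₂ h₁ h₂ z hz
    have hZd' : ∀ s ∈ Ioc a α, HasDerivAt Z (Real.sqrt (-(2*c^2) * G s))⁻¹ s := fun s hs =>
      hZd s ⟨hs.1, hs.2.trans hαb.le⟩
    have u1 := unique_aux c a α g G Z hc haα hGd hGa hGneg hZd' hZα ψ₁ h₁ z hz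
    have u2 := unique_aux c a α g G Z hc haα hGd hGa hGneg hZd' hZα ψ₂ h₂ z hz
    have m1 : ψ₁ z ∈ Ioc a b := ⟨u1.1.1, u1.1.2.trans hαb.le⟩
    have m2 : ψ₂ z ∈ Ioc a b := ⟨u2.1.1, u2.1.2.trans hαb.le⟩
    exact hZinj m1 m2 (u1.2.trans u2.2.symm)
end

section
/- Let c > 0, let g : ℝ → ℝ be continuously differentiable, and let ψ₀ ∈ C²((−∞,0]) satisfy ψ₀''(z) + c² g(ψ₀(z)) = 0 and ψ₀'(z) > 0 for all z ≤ 0. Let F : (−∞,0] → ℝ be continuous with ∫_{−∞}^0 ψ₀'(ζ) |F(ζ)| dζ < ∞, and let β ∈ ℝ. Define φ₁(z) = −β ψ₀'(z)/ψ₀'(0) − ψ₀'(z) ∫_z^0 (ψ₀'(η))^{−2} ( ∫_{−∞}^η ψ₀'(ζ) F(ζ) dζ ) dη for z ≤ 0. Then φ₁ ∈ C²((−∞,0]), φ₁''(z) + c² g'(ψ₀(z)) φ₁(z) = F(z) for all z ≤ 0, and φ₁(0) = −β. -/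
open Set Filter MeasureTheory Topology

noncomputable def Gfun (p F : ℝ → ℝ) : ℝ → ℝ := fun η => ∫ ζ in Iic η, p ζ * F ζ
noncomputable def qfun (p F : ℝ → ℝ) : ℝ → ℝ := fun η => Gfun p F η / p η ^ 2
noncomputable def Hfun (p F : ℝ → ℝ) : ℝ → ℝ := fun z => ∫ η in z..0, qfun p F η
noncomputable def Phifun (β : ℝ) (p F : ℝ → ℝ) : ℝ → ℝ :=
  fun z => -β * p z / p 0 - p z * Hfun p F z

lemma uIcc_sub_Iic {a b : ℝ} (ha : a ∈ Iic (0:ℝ)) (hb : b ∈ Iic (0:ℝ)) :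
    uIcc a b ⊆ Iic (0:ℝ) := fun x hx =>
  mem_Iic.2 (le_trans hx.2 (max_le ha hb))

lemma ftc_right {h : ℝ → ℝ} {a z : ℝ} (hz : z ∈ Iic (0:ℝ))
    (hcont : ContinuousOn h (Iic 0))
    (hint : IntervalIntegrable h volume a z) :
    HasDerivWithinAt (fun u => ∫ x in a..u, h x) (h z) (Iic 0) z := by
  have hmeas : AEStronglyMeasurable h (volume.restrict (Iic 0)) :=
    hcont.aestronglyMeasurable measurableSet_Iic
  rcases lt_or_eq_of_le (mem_Iic.1 hz) with hlt | heq
  · have hnhds : Iic (0:ℝ) ∈ 𝓝 z := Iic_mem_nhds hlt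
    exact (intervalIntegral.integral_hasDerivAt_right hint ⟨Iic 0, hnhds, hmeas⟩
      (hcont.continuousAt hnhds)).hasDerivWithinAt
  · subst heq
    exact intervalIntegral.integral_hasDerivWithinAt_right hint (t := Iic 0)
      ⟨Iic 0, self_mem_nhdsWithin, hmeas⟩ (hcont.continuousWithinAt hz)

lemma ftc_left {h : ℝ → ℝ} {z b : ℝ} (hz : z ∈ Iic (0:ℝ))
    (hcont : ContinuousOn h (Iic 0))
    (hint : IntervalIntegrable h volume z b) :
    HasDerivWithinAt (fun u => ∫ x in u..b, h x) (-h z) (Iic 0) z := by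
  have hmeas : AEStronglyMeasurable h (volume.restrict (Iic 0)) :=
    hcont.aestronglyMeasurable measurableSet_Iic
  rcases lt_or_eq_of_le (mem_Iic.1 hz) with hlt | heq
  · have hnhds : Iic (0:ℝ) ∈ 𝓝 z := Iic_mem_nhds hlt
    exact (intervalIntegral.integral_hasDerivAt_left hint ⟨Iic 0, hnhds, hmeas⟩
      (hcont.continuousAt hnhds)).hasDerivWithinAt
  · subst heq
    exact intervalIntegral.integral_hasDerivWithinAt_left hint (t := Iic 0)
      ⟨Iic 0, self_mem_nhdsWithin, hmeas⟩ (hcont.continuousWithinAt hz)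

lemma vop_aux (p F V : ℝ → ℝ) (β : ℝ) (φ : ℝ → ℝ)
    (hp2 : ContDiffOn ℝ 2 p (Iic 0))
    (hpos : ∀ z ∈ Iic (0:ℝ), 0 < p z)
    (hp'' : ∀ z ∈ Iic (0:ℝ),
      derivWithin (derivWithin p (Iic 0)) (Iic 0) z = -(V z * p z))
    (hF : ContinuousOn F (Iic 0))
    (hFint : IntegrableOn (fun ζ => p ζ * F ζ) (Iic 0))
    (hφ : ∀ z ∈ Iic (0:ℝ), φ z = Phifun β p F z) :
    ContDiffOn ℝ 2 φ (Iic 0) ∧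
    (∀ z ∈ Iic (0:ℝ),
      derivWithin (derivWithin φ (Iic 0)) (Iic 0) z + V z * φ z = F z) ∧
    φ 0 = -β := by
  have uniq : UniqueDiffOn ℝ (Iic (0:ℝ)) := uniqueDiffOn_Iic 0
  have hp1 : ContDiffOn ℝ 1 p (Iic 0) := hp2.of_le one_le_two
  have hpc : ContinuousOn p (Iic 0) := hp1.continuousOn
  have hpFc : ContinuousOn (fun ζ => p ζ * F ζ) (Iic 0) := hpc.mul hF
  have hne : ∀ z ∈ Iic (0:ℝ), p z ≠ 0 := fun z hz => (hpos z hz).ne'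
  have h0 : (0:ℝ) ∈ Iic (0:ℝ) := mem_Iic.2 le_rfl
  have hpFii : ∀ a ∈ Iic (0:ℝ), ∀ b ∈ Iic (0:ℝ),
      IntervalIntegrable (fun ζ => p ζ * F ζ) volume a b := fun a ha b hb =>
    (hFint.mono_set (uIcc_sub_Iic ha hb)).intervalIntegrable
  -- derivative of G
  have hGd : ∀ z ∈ Iic (0:ℝ),
      HasDerivWithinAt (Gfun p F) (p z * F z) (Iic 0) z := by
    intro z hz
    have heq : EqOn (Gfun p F) (fun η => Gfun p F z + ∫ x in z..η, p x * F x) (Iic 0) := by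
      intro η hη
      have h1 := intervalIntegral.integral_Iic_sub_Iic (μ := volume) (f := fun ζ => p ζ * F ζ)
        (hFint.mono_set (Iic_subset_Iic.2 hz)) (hFint.mono_set (Iic_subset_Iic.2 hη))
      simp only [Gfun]
      linarith [h1]
    have hd : HasDerivWithinAt (fun η => Gfun p F z + ∫ x in z..η, p x * F x)
        (p z * F z) (Iic 0) z :=
      (ftc_right hz hpFc (hpFii z hz z hz)).const_add _
    exact hd.congr heq (heq hz)
  have hGcont : ContinuousOn (Gfun p F) (Iic 0) :=
    fun z hz => (hGd z hz).continuousWithinAt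
  have hqc : ContinuousOn (qfun p F) (Iic 0) :=
    hGcont.div (hpc.pow 2) (fun z hz => pow_ne_zero 2 (hne z hz))
  have hqii : ∀ a ∈ Iic (0:ℝ), ∀ b ∈ Iic (0:ℝ),
      IntervalIntegrable (qfun p F) volume a b := fun a ha b hb =>
    (hqc.mono (uIcc_sub_Iic ha hb)).intervalIntegrable
  have hHd : ∀ z ∈ Iic (0:ℝ),
      HasDerivWithinAt (Hfun p F) (-qfun p F z) (Iic 0) z := fun z hz =>
    ftc_left hz hqc (hqii z hz 0 h0)
  -- smoothness
  have h21 : (2 : WithTop ℕ∞) = 1 + 1 := by norm_num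
  have h10 : (1 : WithTop ℕ∞) = 0 + 1 := by norm_num
  have hG1 : ContDiffOn ℝ 1 (Gfun p F) (Iic 0) := by
    rw [h10]
    refine (contDiffOn_succ_iff_derivWithin uniq).2
      ⟨fun z hz => (hGd z hz).differentiableWithinAt, by simp, ?_⟩
    rw [contDiffOn_zero]
    exact hpFc.congr (fun z hz => (hGd z hz).derivWithin (uniq z hz))
  have hq1 : ContDiffOn ℝ 1 (qfun p F) (Iic 0) :=
    hG1.div (hp1.pow 2) (fun z hz => pow_ne_zero 2 (hne z hz))
  have hH2 : ContDiffOn ℝ 2 (Hfun p F) (Iic 0) := by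
    rw [h21]
    refine (contDiffOn_succ_iff_derivWithin uniq).2
      ⟨fun z hz => (hHd z hz).differentiableWithinAt, by simp, ?_⟩
    exact hq1.neg.congr (fun z hz => (hHd z hz).derivWithin (uniq z hz))
  have hΦ2 : ContDiffOn ℝ 2 (Phifun β p F) (Iic 0) :=
    ((contDiffOn_const.mul hp2).div_const _).sub (hp2.mul hH2)
  refine ⟨hΦ2.congr hφ, ?_, ?_⟩
  · -- the ODE
    intro z hz
    have hp'1 : ContDiffOn ℝ 1 (derivWithin p (Iic 0)) (Iic 0) :=
      hp2.derivWithin uniq (by norm_num)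
    have hpd : ∀ y ∈ Iic (0:ℝ),
        HasDerivWithinAt p (derivWithin p (Iic 0) y) (Iic 0) y := fun y hy =>
      (hp1.differentiableOn one_ne_zero y hy).hasDerivWithinAt
    have hp'd : ∀ y ∈ Iic (0:ℝ),
        HasDerivWithinAt (derivWithin p (Iic 0)) (-(V y * p y)) (Iic 0) y := fun y hy =>
      hp'' y hy ▸ (hp'1.differentiableOn one_ne_zero y hy).hasDerivWithinAt
    set p' := derivWithin p (Iic 0) with hp'def
    -- first derivative of Phi
    set Φ' : ℝ → ℝ := fun y =>
      -β * p' y / p 0 - (p' y * Hfun p F y + p y * -qfun p F y) with hΦ'def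
    have hΦd : ∀ y ∈ Iic (0:ℝ),
        HasDerivWithinAt (Phifun β p F) (Φ' y) (Iic 0) y := fun y hy =>
      (((hpd y hy).const_mul (-β)).div_const (p 0)).sub ((hpd y hy).mul (hHd y hy))
    have hd1 : EqOn (derivWithin φ (Iic 0)) Φ' (Iic 0) := by
      intro y hy
      rw [derivWithin_congr hφ (hφ y hy)]
      exact (hΦd y hy).derivWithin (uniq y hy)
    -- second derivative
    have hqd : HasDerivWithinAt (qfun p F)
        ((p z * F z * p z ^ 2 - Gfun p F z * (((2:ℕ):ℝ) * p z ^ (2-1) * p' z)) /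
          (p z ^ 2) ^ 2) (Iic 0) z :=
      (hGd z hz).div ((hpd z hz).pow 2) (pow_ne_zero 2 (hne z hz))
    have hΦ'd : HasDerivWithinAt Φ'
        (-β * -(V z * p z) / p 0 -
          ((-(V z * p z) * Hfun p F z + p' z * -qfun p F z) +
           (p' z * -qfun p F z + p z *
             -((p z * F z * p z ^ 2 - Gfun p F z * (((2:ℕ):ℝ) * p z ^ (2-1) * p' z)) /
               (p z ^ 2) ^ 2)))) (Iic 0) z :=
      (((hp'd z hz).const_mul (-β)).div_const (p 0)).sub
        (((hp'd z hz).mul (hHd z hz)).add ((hpd z hz).mul hqd.neg))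
    have h2 : derivWithin (derivWithin φ (Iic 0)) (Iic 0) z =
        -β * -(V z * p z) / p 0 -
          ((-(V z * p z) * Hfun p F z + p' z * -qfun p F z) +
           (p' z * -qfun p F z + p z *
             -((p z * F z * p z ^ 2 - Gfun p F z * (((2:ℕ):ℝ) * p z ^ (2-1) * p' z)) /
               (p z ^ 2) ^ 2))) := by
      rw [derivWithin_congr hd1 (hd1 hz)]
      exact hΦ'd.derivWithin (uniq z hz)
    rw [h2, hφ z hz]
    simp only [Phifun, qfun, pow_one]
    push_cast
    field_simp [hne z hz, hne 0 h0]
    ring_nf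
  · rw [hφ 0 h0]
    simp only [Phifun, Hfun, intervalIntegral.integral_same, mul_zero, sub_zero]
    rw [neg_mul, neg_div, mul_div_assoc, div_self (hne 0 h0), mul_one]

/-- **Variation of parameters for the linearized layer equation**: if `ψ₀` is a
`C²` solution of `ψ₀'' + c² g(ψ₀) = 0` on `(−∞,0]` with `ψ₀' > 0`, `F` is
continuous with `∫_{−∞}^0 ψ₀'(ζ)|F(ζ)| dζ < ∞`, and
`φ₁(z) = −β ψ₀'(z)/ψ₀'(0) − ψ₀'(z) ∫_z^0 (ψ₀'(η))⁻² (∫_{−∞}^η ψ₀'(ζ) F(ζ) dζ) dη`,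
then `φ₁` is `C²` on `(−∞,0]`, solves `φ₁'' + c² g'(ψ₀) φ₁ = F` there, and
`φ₁(0) = −β`. -/
theorem variation_of_parameters
    (c : ℝ) (hc : 0 < c) (g : ℝ → ℝ) (hg : ContDiff ℝ 1 g)
    (ψ₀ : ℝ → ℝ) (hψ₀ : ContDiffOn ℝ 2 ψ₀ (Iic 0))
    (hode : ∀ z ∈ Iic (0:ℝ),
      derivWithin (derivWithin ψ₀ (Iic 0)) (Iic 0) z + c ^ 2 * g (ψ₀ z) = 0)
    (hpos : ∀ z ∈ Iic (0:ℝ), 0 < derivWithin ψ₀ (Iic 0) z)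
    (F : ℝ → ℝ) (hF : ContinuousOn F (Iic 0))
    (hFint : IntegrableOn (fun ζ => derivWithin ψ₀ (Iic 0) ζ * |F ζ|) (Iic 0))
    (β : ℝ) (φ₁ : ℝ → ℝ)
    (hφ₁ : ∀ z ∈ Iic (0:ℝ),
      φ₁ z = -β * derivWithin ψ₀ (Iic 0) z / derivWithin ψ₀ (Iic 0) 0
        - derivWithin ψ₀ (Iic 0) z *
          ∫ η in z..0,
            (∫ ζ in Iic η, derivWithin ψ₀ (Iic 0) ζ * F ζ) /
              (derivWithin ψ₀ (Iic 0) η) ^ 2) :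
    ContDiffOn ℝ 2 φ₁ (Iic 0) ∧
    (∀ z ∈ Iic (0:ℝ),
      derivWithin (derivWithin φ₁ (Iic 0)) (Iic 0) z
        + c ^ 2 * deriv g (ψ₀ z) * φ₁ z = F z) ∧
    φ₁ 0 = -β := by
  have uniq : UniqueDiffOn ℝ (Iic (0:ℝ)) := uniqueDiffOn_Iic 0
  set p := derivWithin ψ₀ (Iic 0) with hpdef
  have hp1 : ContDiffOn ℝ 1 p (Iic 0) := hψ₀.derivWithin uniq (by norm_num)
  have hpc : ContinuousOn p (Iic 0) := hp1.continuousOn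
  have hp'eq : ∀ z ∈ Iic (0:ℝ), derivWithin p (Iic 0) z = -(c ^ 2 * g (ψ₀ z)) := by
    intro z hz
    have := hode z hz
    linarith
  have hgψ : ContDiffOn ℝ 1 (fun z => -(c ^ 2 * g (ψ₀ z))) (Iic 0) :=
    (contDiffOn_const.mul (hg.comp_contDiffOn (hψ₀.of_le one_le_two))).neg
  have hp2 : ContDiffOn ℝ 2 p (Iic 0) := by
    have h21 : (2 : WithTop ℕ∞) = 1 + 1 := by norm_num
    rw [h21]
    exact (contDiffOn_succ_iff_derivWithin uniq).2
      ⟨hp1.differentiableOn one_ne_zero, by simp, hgψ.congr hp'eq⟩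
  have hp'' : ∀ z ∈ Iic (0:ℝ),
      derivWithin (derivWithin p (Iic 0)) (Iic 0) z = -(c ^ 2 * deriv g (ψ₀ z) * p z) := by
    intro z hz
    rw [derivWithin_congr hp'eq (hp'eq z hz)]
    have hψd : HasDerivWithinAt ψ₀ (p z) (Iic 0) z :=
      (hψ₀.differentiableOn (by norm_num) z hz).hasDerivWithinAt
    have hgd : HasDerivAt g (deriv g (ψ₀ z)) (ψ₀ z) :=
      ((hg.differentiable one_ne_zero) (ψ₀ z)).hasDerivAt
    have hcomp : HasDerivWithinAt (fun z => -(c ^ 2 * g (ψ₀ z)))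
        (-(c ^ 2 * (deriv g (ψ₀ z) * p z))) (Iic 0) z :=
      ((hgd.comp_hasDerivWithinAt z hψd).const_mul (c ^ 2)).neg
    rw [hcomp.derivWithin (uniq z hz)]
    ring
  have hmeas : AEStronglyMeasurable (fun ζ => p ζ * F ζ) (volume.restrict (Iic 0)) :=
    (hpc.mul hF).aestronglyMeasurable measurableSet_Iic
  have hFint' : IntegrableOn (fun ζ => p ζ * F ζ) (Iic 0) := by
    refine Integrable.mono' hFint hmeas ?_
    refine (ae_restrict_iff' measurableSet_Iic).2 (ae_of_all _ fun x hx => ?_)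
    rw [Real.norm_eq_abs, abs_mul, abs_of_pos (hpos x hx)]
  have hφ : ∀ z ∈ Iic (0:ℝ), φ₁ z = Phifun β p F z := by
    intro z hz
    rw [hφ₁ z hz]
    rfl
  exact vop_aux p F (fun z => c ^ 2 * deriv g (ψ₀ z)) β φ₁ hp2 hpos hp'' hF hFint' hφ
end

section
/- Let f : ℝ → ℝ be continuously differentiable with exactly three zeros h⁻ < h⁰ < h⁺ in the interval [h⁻, h⁺], satisfying f'(h⁻) < 0, f'(h⁺) < 0, f'(h⁰) > 0, and suppose ∫_{h⁻}^{h⁺} f(u) du = 0. Then there exists a strictly increasing function Q ∈ C²(ℝ) satisfying Q''(ζ) + f(Q(ζ)) = 0 for all ζ ∈ ℝ, lim_{ζ→−∞} Q(ζ) = h⁻, lim_{ζ→+∞} Q(ζ) = h⁺, and Q(0) = h⁰. -/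
open Set Filter

open Topology MeasureTheory intervalIntegral in
/-- **Existence of the standing front (heteroclinic) profile**: if `f` is `C¹`
with exactly the three zeros `h⁻ < h⁰ < h⁺` in `[h⁻,h⁺]`, `f'(h±) < 0`,
`f'(h⁰) > 0`, and the Maxwell condition `∫_{h⁻}^{h⁺} f = 0` holds, then there
is a strictly increasing `C²` solution `Q` of `Q'' + f(Q) = 0` on `ℝ` with
`Q(−∞) = h⁻`, `Q(+∞) = h⁺` and `Q(0) = h⁰`. -/
theorem standing_front_exists
    (hm h0 hp : ℝ) (h1 : hm < h0) (h2 : h0 < hp)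
    (f : ℝ → ℝ) (hf : ContDiff ℝ 1 f)
    (hzeros : ∀ u ∈ Icc hm hp, f u = 0 ↔ u = hm ∨ u = h0 ∨ u = hp)
    (h'm : deriv f hm < 0) (h'p : deriv f hp < 0) (h'0 : 0 < deriv f h0)
    (hMaxwell : (∫ u in hm..hp, f u) = 0) :
    ∃ Q : ℝ → ℝ, ContDiff ℝ 2 Q ∧ StrictMono Q ∧
      (∀ ζ : ℝ, deriv (deriv Q) ζ + f (Q ζ) = 0) ∧
      Tendsto Q atBot (nhds hm) ∧ Tendsto Q atTop (nhds hp) ∧ Q 0 = h0 := by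
  have hmp : hm < hp := h1.trans h2
  have hcf : Continuous f := hf.continuous
  have hcf' : Continuous (deriv f) := (contDiff_one_iff_deriv.1 hf).2
  have fh0 : f h0 = 0 := (hzeros h0 ⟨h1.le, h2.le⟩).2 (Or.inr (Or.inl rfl))
  have fhp : f hp = 0 := (hzeros hp ⟨hmp.le, le_rfl⟩).2 (Or.inr (Or.inr rfl))
  have fhm : f hm = 0 := (hzeros hm ⟨le_rfl, hmp.le⟩).2 (Or.inl rfl)
  have hnz : ∀ u, hm < u → u < hp → u ≠ h0 → f u ≠ 0 := by
    intro u hu1 hu2 hu3 hfu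
    rcases (hzeros u ⟨hu1.le, hu2.le⟩).1 hfu with h | h | h
    · exact absurd h hu1.ne'
    · exact hu3 h
    · exact absurd h hu2.ne
  -- slope of f near h0 is eventually positive
  have hd0 : HasDerivAt f (deriv f h0) h0 := ((hf.differentiable one_ne_zero) h0).hasDerivAt
  have hslope_pos : ∀ᶠ u in 𝓝[≠] h0, 0 < slope f h0 u :=
    (hasDerivAt_iff_tendsto_slope.1 hd0).eventually (eventually_gt_nhds h'0)
  -- a point with negative value just left of h0, above any w < h0
  have left_pt : ∀ w ∈ Ioo hm h0, ∃ v ∈ Ioo w h0, f v < 0 := by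
    intro w hw
    have hev : ∀ᶠ v in 𝓝[<] h0, 0 < slope f h0 v :=
      hslope_pos.filter_mono (nhdsWithin_mono _ fun v hv => ne_of_lt hv)
    have hmem : Ioo w h0 ∈ 𝓝[<] h0 := Ioo_mem_nhdsLT_of_mem ⟨hw.2, le_rfl⟩
    obtain ⟨v, hs, hv⟩ := (hev.and (eventually_of_mem hmem fun v hv => hv)).exists
    refine ⟨v, hv, ?_⟩
    rw [slope_def_field, fh0, sub_zero] at hs
    rcases div_pos_iff.1 hs with ⟨_, hden⟩ | ⟨hnum, _⟩
    · exact absurd hden (by simp [sub_pos, hv.2, not_lt, hv.2.le])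
    · exact hnum
  have right_pt : ∀ w ∈ Ioo h0 hp, ∃ v ∈ Ioo h0 w, 0 < f v := by
    intro w hw
    have hev : ∀ᶠ v in 𝓝[>] h0, 0 < slope f h0 v :=
      hslope_pos.filter_mono (nhdsWithin_mono _ fun v hv => ne_of_gt hv)
    have hmem : Ioo h0 w ∈ 𝓝[>] h0 := Ioo_mem_nhdsGT_of_mem ⟨le_rfl, hw.1⟩
    obtain ⟨v, hs, hv⟩ := (hev.and (eventually_of_mem hmem fun v hv => hv)).exists
    refine ⟨v, hv, ?_⟩
    rw [slope_def_field, fh0, sub_zero] at hs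
    rcases div_pos_iff.1 hs with ⟨hnum, _⟩ | ⟨_, hden⟩
    · exact hnum
    · exact absurd hden (by simp [not_lt, sub_nonneg, hv.1.le])
  -- sign of f on the two subintervals
  have fneg : ∀ u ∈ Ioo hm h0, f u < 0 := by
    intro u hu
    rcases lt_trichotomy (f u) 0 with h | h | h
    · exact h
    · exact absurd h (hnz u hu.1 (hu.2.trans h2) hu.2.ne)
    · exfalso
      obtain ⟨v, hv, hfv⟩ := left_pt u hu
      have hsub : Icc u v ⊆ Icc hm hp := fun x hx =>
        ⟨hu.1.le.trans hx.1, hx.2.trans (hv.2.le.trans h2.le)⟩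
      have : (0 : ℝ) ∈ f '' Icc u v := by
        apply intermediate_value_Icc' hv.1.le (hcf.continuousOn)
        exact ⟨hfv.le, h.le⟩
      obtain ⟨c, hc, hfc⟩ := this
      have hc1 : hm < c := lt_of_lt_of_le hu.1 hc.1
      have hc2 : c < h0 := lt_of_le_of_lt hc.2 hv.2
      exact hnz c hc1 (hc2.trans h2) hc2.ne hfc
  have fpos : ∀ u ∈ Ioo h0 hp, 0 < f u := by
    intro u hu
    rcases lt_trichotomy 0 (f u) with h | h | h
    · exact h
    · exact absurd h.symm (hnz u (h1.trans hu.1) hu.2 hu.1.ne')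
    · exfalso
      obtain ⟨v, hv, hfv⟩ := right_pt u hu
      have : (0 : ℝ) ∈ f '' Icc v u := by
        apply intermediate_value_Icc' hv.2.le (hcf.continuousOn)
        exact ⟨h.le, hfv.le⟩
      obtain ⟨c, hc, hfc⟩ := this
      have hc1 : h0 < c := lt_of_lt_of_le hv.1 hc.1
      have hc2 : c < hp := lt_of_le_of_lt hc.2 hu.2
      exact hnz c (h1.trans hc1) hc2 hc1.ne' hfc
  -- the potential G u = ∫_u^{hp} f
  set G : ℝ → ℝ := fun u => ∫ s in u..hp, f s with hG
  have hGderiv : ∀ u : ℝ, HasDerivAt G (-f u) u := by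
    intro u
    exact intervalIntegral.integral_hasDerivAt_left (hcf.intervalIntegrable _ _)
      (hcf.stronglyMeasurableAtFilter _ _) hcf.continuousAt
  have hGcont : Continuous G :=
    continuous_iff_continuousAt.2 fun u => (hGderiv u).continuousAt
  have hGhp : G hp = 0 := intervalIntegral.integral_same
  have hGhm : G hm = 0 := hMaxwell
  have hGsplit : ∀ u, (∫ s in hm..u, f s) + G u = 0 := by
    intro u
    rw [hG]
    rw [intervalIntegral.integral_add_adjacent_intervals (hcf.intervalIntegrable _ _)
      (hcf.intervalIntegrable _ _)]
    exact hMaxwell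
  have Gpos : ∀ u ∈ Ioo hm hp, 0 < G u := by
    intro u hu
    rcases le_or_gt u h0 with hcase | hcase
    · -- G u = -∫_hm^u f > 0 since f < 0 there
      have hneg : (∫ s in hm..u, f s) < 0 := by
        have : 0 < ∫ s in hm..u, -f s := by
          apply intervalIntegral.intervalIntegral_pos_of_pos_on
            ((hcf.neg).intervalIntegrable _ _)
          · intro x hx
            refine neg_pos.2 ?_
            exact fneg x ⟨hx.1, lt_of_lt_of_le hx.2 hcase⟩
          · exact hu.1
        rw [intervalIntegral.integral_neg] at this
        linarith
      have := hGsplit u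
      linarith
    · apply intervalIntegral.intervalIntegral_pos_of_pos_on (hcf.intervalIntegrable _ _)
      · intro x hx
        exact fpos x ⟨hcase.trans hx.1, hx.2⟩
      · exact hu.2
  -- g = sqrt (2 G)
  set g : ℝ → ℝ := fun u => Real.sqrt (2 * G u) with hgdef
  have hgcont : Continuous g := (continuous_const.mul hGcont).sqrt
  have gpos : ∀ u ∈ Ioo hm hp, 0 < g u := fun u hu =>
    Real.sqrt_pos.2 (by linarith [Gpos u hu]) 
  -- the time map
  set z : ℝ → ℝ := fun u => ∫ s in h0..u, (g s)⁻¹ with hzdef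
  have hIooOrd : OrdConnected (Ioo hm hp) := ordConnected_Ioo
  have hinv_contOn : ContinuousOn (fun s => (g s)⁻¹) (Ioo hm hp) :=
    hgcont.continuousOn.inv₀ fun s hs => (gpos s hs).ne'
  have hintg : ∀ a ∈ Ioo hm hp, ∀ b ∈ Ioo hm hp,
      IntervalIntegrable (fun s => (g s)⁻¹) volume a b := fun a ha b hb =>
    (hinv_contOn.mono (hIooOrd.uIcc_subset ha hb)).intervalIntegrable
  have h0mem : h0 ∈ Ioo hm hp := ⟨h1, h2⟩
  have hzderiv : ∀ u ∈ Ioo hm hp, HasDerivAt z (g u)⁻¹ u := by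
    intro u hu
    exact intervalIntegral.integral_hasDerivAt_right (hintg h0 h0mem u hu)
      (hinv_contOn.stronglyMeasurableAtFilter isOpen_Ioo u hu)
      (hinv_contOn.continuousAt (isOpen_Ioo.mem_nhds hu))
  have hzcontOn : ContinuousOn z (Ioo hm hp) := fun u hu =>
    ((hzderiv u hu).continuousAt).continuousWithinAt
  have hzmono : StrictMonoOn z (Ioo hm hp) := by
    apply strictMonoOn_of_deriv_pos (convex_Ioo hm hp) hzcontOn
    intro x hx
    rw [interior_Ioo] at hx
    rw [(hzderiv x hx).deriv]
    exact inv_pos.2 (gpos x hx)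
  have hzh0 : z h0 = 0 := intervalIntegral.integral_same
  -- a bound on the derivative of f
  obtain ⟨M0, hM0⟩ := (isCompact_Icc (a := hm) (b := hp)).exists_bound_of_continuousOn
    hcf'.continuousOn
  set M : ℝ := max M0 1 with hMdef
  have hM1 : (1 : ℝ) ≤ M := le_max_right _ _
  have hMpos : (0 : ℝ) < M := lt_of_lt_of_le one_pos hM1
  have hMbound : ∀ s ∈ Icc hm hp, |deriv f s| ≤ M := fun s hs =>
    (hM0 s hs).trans (le_max_left _ _)
  -- |f s| ≤ M (hp - s) on [h0, hp]
  have hfub : ∀ s ∈ Icc h0 hp, |f s| ≤ M * (hp - s) := by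
    intro s hs
    rcases eq_or_lt_of_le hs.2 with heq | hlt
    · simp [heq, fhp]
    · obtain ⟨c, hc, hc'⟩ := exists_hasDerivAt_eq_slope f (deriv f) hlt
        hcf.continuousOn (fun x _ => ((hf.differentiable one_ne_zero) x).hasDerivAt)
      have hcmem : c ∈ Icc hm hp := ⟨(h1.trans_le (hs.1.trans hc.1.le)).le, hc.2.le⟩
      have : f s = -(deriv f c) * (hp - s) := by
        rw [hc', fhp]
        rw [zero_sub, neg_div, neg_neg, div_mul_cancel₀ _ (by linarith : hp - s ≠ 0)]
      rw [this, abs_mul, abs_of_nonneg (by linarith : (0:ℝ) ≤ hp - s), abs_neg]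
      exact mul_le_mul_of_nonneg_right (hMbound c hcmem) (by linarith)
  -- |f s| ≤ M (s - hm) on [hm, h0]
  have hflb : ∀ s ∈ Icc hm h0, |f s| ≤ M * (s - hm) := by
    intro s hs
    rcases eq_or_lt_of_le hs.1 with heq | hlt
    · simp [← heq, fhm]
    · obtain ⟨c, hc, hc'⟩ := exists_hasDerivAt_eq_slope f (deriv f) hlt
        hcf.continuousOn (fun x _ => ((hf.differentiable one_ne_zero) x).hasDerivAt)
      have hcmem : c ∈ Icc hm hp := ⟨hc.1.le, (hc.2.trans_le hs.2).le.trans h2.le⟩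
      have : f s = deriv f c * (s - hm) := by
        rw [hc', fhm, sub_zero, div_mul_cancel₀ _ (by linarith : s - hm ≠ 0)]
      rw [this, abs_mul, abs_of_nonneg (by linarith : (0:ℝ) ≤ s - hm)]
      exact mul_le_mul_of_nonneg_right (hMbound c hcmem) (by linarith)
  -- quadratic bounds on G
  have hGub : ∀ u ∈ Icc h0 hp, G u ≤ M * (hp - u) ^ 2 := by
    intro u hu
    have hle : (∫ s in u..hp, f s) ≤ ∫ s in u..hp, M * (hp - u) := by
      apply intervalIntegral.integral_mono_on hu.2 (hcf.intervalIntegrable _ _)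
        (intervalIntegrable_const)
      intro x hx
      have h1x : |f x| ≤ M * (hp - x) := hfub x ⟨hu.1.trans hx.1, hx.2⟩
      have : M * (hp - x) ≤ M * (hp - u) :=
        mul_le_mul_of_nonneg_left (by linarith [hx.1]) hMpos.le
      calc f x ≤ |f x| := le_abs_self _
        _ ≤ M * (hp - x) := h1x
        _ ≤ M * (hp - u) := this
    rw [intervalIntegral.integral_const, smul_eq_mul] at hle
    calc G u ≤ (hp - u) * (M * (hp - u)) := hle
      _ = M * (hp - u) ^ 2 := by ring
  have hGlb : ∀ u ∈ Icc hm h0, G u ≤ M * (u - hm) ^ 2 := by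
    intro u hu
    have key : G u = ∫ s in hm..u, -f s := by
      have := hGsplit u
      rw [intervalIntegral.integral_neg]
      linarith
    have hle : (∫ s in hm..u, -f s) ≤ ∫ s in hm..u, M * (u - hm) := by
      apply intervalIntegral.integral_mono_on hu.1 ((hcf.neg).intervalIntegrable _ _)
        (intervalIntegrable_const)
      intro x hx
      have h1x : |f x| ≤ M * (x - hm) := hflb x ⟨hx.1, hx.2.trans hu.2⟩
      have : M * (x - hm) ≤ M * (u - hm) :=
        mul_le_mul_of_nonneg_left (by linarith [hx.2]) hMpos.le
      calc -f x ≤ |f x| := neg_le_abs _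
        _ ≤ M * (x - hm) := h1x
        _ ≤ M * (u - hm) := this
    rw [intervalIntegral.integral_const, smul_eq_mul] at hle
    calc G u = ∫ s in hm..u, -f s := key
      _ ≤ (u - hm) * (M * (u - hm)) := hle
      _ = M * (u - hm) ^ 2 := by ring
  -- linear bounds on g
  set C : ℝ := Real.sqrt (2 * M) with hCdef
  have hCpos : 0 < C := Real.sqrt_pos.2 (by linarith)
  have hgub : ∀ u ∈ Icc h0 hp, g u ≤ C * (hp - u) := by
    intro u hu
    have h2G : 2 * G u ≤ 2 * M * (hp - u) ^ 2 := by linarith [hGub u hu]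
    calc g u ≤ Real.sqrt (2 * M * (hp - u) ^ 2) := Real.sqrt_le_sqrt (by linarith)
      _ = C * (hp - u) := by
          rw [Real.sqrt_mul (by linarith : (0:ℝ) ≤ 2 * M),
            Real.sqrt_sq (by linarith [hu.2] : (0:ℝ) ≤ hp - u)]
  have hglb : ∀ u ∈ Icc hm h0, g u ≤ C * (u - hm) := by
    intro u hu
    have h2G : 2 * G u ≤ 2 * M * (u - hm) ^ 2 := by linarith [hGlb u hu]
    calc g u ≤ Real.sqrt (2 * M * (u - hm) ^ 2) := Real.sqrt_le_sqrt (by linarith)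
      _ = C * (u - hm) := by
          rw [Real.sqrt_mul (by linarith : (0:ℝ) ≤ 2 * M),
            Real.sqrt_sq (by linarith [hu.1] : (0:ℝ) ≤ u - hm)]
  -- lower bound for z on [h0, hp)
  have hcompute_p : ∀ u ∈ Ico h0 hp,
      (∫ s in h0..u, C⁻¹ * (hp - s)⁻¹) =
        C⁻¹ * (Real.log (hp - h0) - Real.log (hp - u)) := by
    intro u hu
    rw [intervalIntegral.integral_const_mul]
    congr 1
    have : (∫ s in h0..u, (hp - s)⁻¹) = ∫ x in hp - u..hp - h0, x⁻¹ :=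
      intervalIntegral.integral_comp_sub_left (fun x => x⁻¹) hp
    rw [this, integral_inv, Real.log_div (by linarith : hp - h0 ≠ 0)
      (by linarith [hu.2] : hp - u ≠ 0)]
    exact notMem_uIcc_of_lt (by linarith [hu.2]) (by linarith)
  have hzub : ∀ u ∈ Ico h0 hp,
      C⁻¹ * (Real.log (hp - h0) - Real.log (hp - u)) ≤ z u := by
    intro u hu
    have hsub : Icc h0 u ⊆ Ioo hm hp := fun x hx =>
      ⟨h1.trans_le hx.1, lt_of_le_of_lt hx.2 hu.2⟩
    have hint2 : IntervalIntegrable (fun s => C⁻¹ * (hp - s)⁻¹) volume h0 u := by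
      apply ContinuousOn.intervalIntegrable
      apply ContinuousOn.mul continuousOn_const
      apply ContinuousOn.inv₀ (by fun_prop)
      intro x hx
      rw [uIcc_of_le hu.1] at hx
      have : x < hp := lt_of_le_of_lt hx.2 hu.2
      intro h; linarith [sub_eq_zero.1 h]
    rw [← hcompute_p u hu]
    apply intervalIntegral.integral_mono_on hu.1 hint2 (hintg h0 h0mem u (hsub ⟨hu.1, le_rfl⟩))
    intro x hx
    have hxm : x ∈ Ioo hm hp := hsub hx
    have hgx : 0 < g x := gpos x hxm
    have hxp : 0 < hp - x := by linarith [hxm.2]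
    have hgu : g x ≤ C * (hp - x) := hgub x ⟨hx.1, hxm.2.le⟩
    rw [← mul_inv]
    exact inv_anti₀ hgx hgu
  -- upper bound for z on (hm, h0]
  have hcompute_m : ∀ u ∈ Ioc hm h0,
      (∫ s in u..h0, C⁻¹ * (s - hm)⁻¹) =
        C⁻¹ * (Real.log (h0 - hm) - Real.log (u - hm)) := by
    intro u hu
    rw [intervalIntegral.integral_const_mul]
    congr 1
    have : (∫ s in u..h0, (s - hm)⁻¹) = ∫ x in u - hm..h0 - hm, x⁻¹ :=
      intervalIntegral.integral_comp_sub_right (fun x => x⁻¹) hm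
    rw [this, integral_inv, Real.log_div (by linarith : h0 - hm ≠ 0)
      (by linarith [hu.1] : u - hm ≠ 0)]
    exact notMem_uIcc_of_lt (by linarith [hu.1]) (by linarith)
  have hzlb : ∀ u ∈ Ioc hm h0,
      z u ≤ -(C⁻¹ * (Real.log (h0 - hm) - Real.log (u - hm))) := by
    intro u hu
    have hsub : Icc u h0 ⊆ Ioo hm hp := fun x hx =>
      ⟨lt_of_lt_of_le hu.1 hx.1, lt_of_le_of_lt (hx.2.trans (le_refl h0)) h2⟩
    have hzneg : z u = -∫ s in u..h0, (g s)⁻¹ :=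
      intervalIntegral.integral_symm u h0
    have hint2 : IntervalIntegrable (fun s => C⁻¹ * (s - hm)⁻¹) volume u h0 := by
      apply ContinuousOn.intervalIntegrable
      apply ContinuousOn.mul continuousOn_const
      apply ContinuousOn.inv₀ (by fun_prop)
      intro x hx
      rw [uIcc_of_le hu.2] at hx
      have : hm < x := lt_of_lt_of_le hu.1 hx.1
      intro h; linarith [sub_eq_zero.1 h]
    rw [hzneg, neg_le_neg_iff, ← hcompute_m u hu]
    apply intervalIntegral.integral_mono_on hu.2 hint2
      (hintg u (hsub ⟨le_rfl, hu.2⟩) h0 h0mem)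
    intro x hx
    have hxm : x ∈ Ioo hm hp := hsub hx
    have hgx : 0 < g x := gpos x hxm
    have hgu : g x ≤ C * (x - hm) := hglb x ⟨hxm.1.le, hx.2⟩
    rw [← mul_inv]
    exact inv_anti₀ hgx hgu
  -- divergence of z at the endpoints
  have hlogp : Tendsto (fun u => Real.log (hp - u)) (𝓝[<] hp) atBot := by
    apply Real.tendsto_log_nhdsGT_zero.comp
    apply tendsto_nhdsWithin_of_tendsto_nhds_of_eventually_within
    · have : Tendsto (fun u => hp - u) (𝓝 hp) (𝓝 (hp - hp)) :=
        (tendsto_const_nhds.sub tendsto_id)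
      simpa using this.mono_left nhdsWithin_le_nhds
    · exact eventually_nhdsWithin_of_forall fun x hx => by
        simp only [mem_Ioi, sub_pos]; exact hx
  have hlogm : Tendsto (fun u => Real.log (u - hm)) (𝓝[>] hm) atBot := by
    apply Real.tendsto_log_nhdsGT_zero.comp
    apply tendsto_nhdsWithin_of_tendsto_nhds_of_eventually_within
    · have : Tendsto (fun u => u - hm) (𝓝 hm) (𝓝 (hm - hm)) :=
        (tendsto_id.sub tendsto_const_nhds)
      simpa using this.mono_left nhdsWithin_le_nhds
    · exact eventually_nhdsWithin_of_forall fun x hx => by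
        simp only [mem_Ioi, sub_pos]; exact hx
  have hz_top : Tendsto z (𝓝[<] hp) atTop := by
    apply tendsto_atTop_mono' (𝓝[<] hp)
      (f₁ := fun u => C⁻¹ * (Real.log (hp - h0) - Real.log (hp - u)))
    · filter_upwards [Ioo_mem_nhdsLT_of_mem (⟨h2, le_rfl⟩ : hp ∈ Ioc h0 hp)] with u hu
      exact hzub u ⟨hu.1.le, hu.2⟩
    · apply Tendsto.const_mul_atTop (inv_pos.2 hCpos)
      apply tendsto_atTop_add_const_left
      exact (tendsto_neg_atBot_atTop).comp hlogp
  have hz_bot : Tendsto z (𝓝[>] hm) atBot := by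
    apply tendsto_atBot_mono' (𝓝[>] hm)
      (f₁ := fun u => -(C⁻¹ * (Real.log (h0 - hm) - Real.log (u - hm))))
    · filter_upwards [Ioo_mem_nhdsGT_of_mem (⟨le_rfl, h1⟩ : hm ∈ Ico hm h0)] with u hu
      exact hzlb u ⟨hu.1, hu.2.le⟩
    · have : Tendsto (fun u : ℝ => C⁻¹ * (Real.log (u - hm) - Real.log (h0 - hm)))
          (𝓝[>] hm) atBot := by
        apply Tendsto.const_mul_atBot (inv_pos.2 hCpos)
        exact tendsto_atBot_add_const_right _ _ hlogm
      apply this.congr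
      intro u; ring
  -- surjectivity of z : (hm, hp) → ℝ
  have hsurj : ∀ x : ℝ, ∃ u, u ∈ Ioo hm hp ∧ z u = x := by
    intro x
    obtain ⟨u2, hu2x, hu2mem⟩ :=
      ((hz_top.eventually (eventually_gt_atTop x)).and
        (eventually_of_mem (Ioo_mem_nhdsLT_of_mem (⟨h2, le_rfl⟩ : hp ∈ Ioc h0 hp))
          (fun v hv => (⟨h1.trans hv.1, hv.2⟩ : v ∈ Ioo hm hp)))).exists
    obtain ⟨u1, hu1x, hu1mem⟩ :=
      ((hz_bot.eventually (eventually_lt_atBot x)).and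
        (eventually_of_mem (Ioo_mem_nhdsGT_of_mem (⟨le_rfl, h1⟩ : hm ∈ Ico hm h0))
          (fun v hv => (⟨hv.1, hv.2.trans h2⟩ : v ∈ Ioo hm hp)))).exists
    have hzlt : z u1 < z u2 := hu1x.trans hu2x
    have hu12 : u1 < u2 := by
      by_contra hcon
      push_neg at hcon
      rcases eq_or_lt_of_le hcon with heq | hlt
      · rw [heq] at hzlt; exact lt_irrefl _ hzlt
      · exact absurd (hzmono hu2mem hu1mem hlt) (by linarith)
    have hsub : Icc u1 u2 ⊆ Ioo hm hp := fun v hv =>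
      ⟨hu1mem.1.trans_le hv.1, lt_of_le_of_lt hv.2 hu2mem.2⟩
    have : x ∈ z '' Icc u1 u2 := by
      apply intermediate_value_Icc hu12.le (hzcontOn.mono hsub)
      exact ⟨hu1x.le, hu2x.le⟩
    obtain ⟨u, hu, hzu⟩ := this
    exact ⟨u, hsub hu, hzu⟩
  -- the profile Q
  set Q : ℝ → ℝ := fun x => (hsurj x).choose with hQdef
  have hQmem : ∀ x, Q x ∈ Ioo hm hp := fun x => (hsurj x).choose_spec.1
  have hQval : ∀ x, z (Q x) = x := fun x => (hsurj x).choose_spec.2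
  have hQlt : ∀ {u x : ℝ}, u ∈ Ioo hm hp → z u < x → u < Q x := by
    intro u x hu hx
    by_contra hcon
    push_neg at hcon
    rcases eq_or_lt_of_le hcon with heq | hlt
    · rw [← heq, hQval] at hx; exact lt_irrefl _ hx
    · have := hzmono (hQmem x) hu hlt
      rw [hQval] at this
      linarith
  have hQgt : ∀ {u x : ℝ}, u ∈ Ioo hm hp → x < z u → Q x < u := by
    intro u x hu hx
    by_contra hcon
    push_neg at hcon
    rcases eq_or_lt_of_le hcon with heq | hlt
    · rw [heq, hQval] at hx; exact lt_irrefl _ hx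
    · have := hzmono hu (hQmem x) hlt
      rw [hQval] at this
      linarith
  have hQmono : StrictMono Q := by
    intro x y hxy
    have : z (Q x) < z (Q y) := by rw [hQval, hQval]; exact hxy
    by_contra hcon
    push_neg at hcon
    rcases eq_or_lt_of_le hcon with heq | hlt
    · rw [heq] at this; exact lt_irrefl _ this
    · exact absurd (hzmono (hQmem y) (hQmem x) hlt) (by linarith)
  -- continuity of Q
  have hQcont : Continuous Q := by
    rw [continuous_iff_continuousAt]
    intro a
    rw [ContinuousAt, tendsto_order]
    constructor
    · intro b hb
      have hmax : max b hm < Q a := max_lt hb (hQmem a).1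
      obtain ⟨u1, hu1⟩ := exists_between hmax
      have hu1mem : u1 ∈ Ioo hm hp :=
        ⟨(le_max_right b hm).trans_lt hu1.1, hu1.2.trans (hQmem a).2⟩
      have hz1 : z u1 < a := by
        have := hzmono hu1mem (hQmem a) hu1.2
        rwa [hQval] at this
      filter_upwards [Ioi_mem_nhds hz1] with x hx
      exact lt_of_le_of_lt (le_max_left b hm) (hu1.1.trans (hQlt hu1mem hx))
    · intro b hb
      have hmin : Q a < min b hp := lt_min hb (hQmem a).2
      obtain ⟨u1, hu1⟩ := exists_between hmin
      have hu1mem : u1 ∈ Ioo hm hp :=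
        ⟨(hQmem a).1.trans hu1.1, hu1.2.trans_le (min_le_right b hp)⟩
      have hz1 : a < z u1 := by
        have := hzmono (hQmem a) hu1mem hu1.1
        rwa [hQval] at this
      filter_upwards [Iio_mem_nhds hz1] with x hx
      exact lt_of_lt_of_le ((hQgt hu1mem hx).trans hu1.2) (min_le_left b hp)
  -- limits of Q
  have hQtop : Tendsto Q atTop (nhds hp) := by
    rw [tendsto_order]
    constructor
    · intro b hb
      have hmax : max b hm < hp := max_lt hb hmp
      obtain ⟨u1, hu1⟩ := exists_between hmax
      have hu1mem : u1 ∈ Ioo hm hp := ⟨(le_max_right b hm).trans_lt hu1.1, hu1.2⟩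
      filter_upwards [eventually_gt_atTop (z u1)] with x hx
      exact lt_of_le_of_lt (le_max_left b hm) (hu1.1.trans (hQlt hu1mem hx))
    · intro b hb
      exact Eventually.of_forall fun x => (hQmem x).2.trans hb
  have hQbot : Tendsto Q atBot (nhds hm) := by
    rw [tendsto_order]
    constructor
    · intro b hb
      exact Eventually.of_forall fun x => hb.trans (hQmem x).1
    · intro b hb
      have hmin : hm < min b hp := lt_min hb hmp
      obtain ⟨u1, hu1⟩ := exists_between hmin
      have hu1mem : u1 ∈ Ioo hm hp := ⟨hu1.1, hu1.2.trans_le (min_le_right b hp)⟩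
      filter_upwards [eventually_lt_atBot (z u1)] with x hx
      exact lt_of_lt_of_le ((hQgt hu1mem hx).trans hu1.2) (min_le_left b hp)
  -- Q 0 = h0
  have hQ0 : Q 0 = h0 := by
    have : z (Q 0) = z h0 := by rw [hQval, hzh0]
    exact hzmono.injOn (hQmem 0) h0mem this
  -- derivative of Q
  have hQderiv : ∀ x : ℝ, HasDerivAt Q (g (Q x)) x := by
    intro x
    have hne : (g (Q x))⁻¹ ≠ 0 := inv_ne_zero (gpos _ (hQmem x)).ne'
    have := HasDerivAt.of_local_left_inverse (hQcont.continuousAt)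
      (hzderiv (Q x) (hQmem x)) hne (Eventually.of_forall hQval)
    rwa [inv_inv] at this
  have hderivQ : deriv Q = fun x => g (Q x) := funext fun x => (hQderiv x).deriv
  -- derivative of g
  have hgderiv : ∀ u ∈ Ioo hm hp, HasDerivAt g (-f u / g u) u := by
    intro u hu
    have h2G : HasDerivAt (fun v => 2 * G v) (2 * -f u) u := (hGderiv u).const_mul 2
    have hne : 2 * G u ≠ 0 := by have := Gpos u hu; positivity
    have := h2G.sqrt hne
    convert this using 1
    rw [hgdef]
    have hgu : Real.sqrt (2 * G u) = g u := rfl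
    field_simp [hgu]
  -- second derivative of Q
  have hQderiv2 : ∀ x : ℝ, HasDerivAt (deriv Q) (-f (Q x)) x := by
    intro x
    rw [hderivQ]
    have hcomp := (hgderiv (Q x) (hQmem x)).comp x (hQderiv x)
    have : -f (Q x) / g (Q x) * g (Q x) = -f (Q x) :=
      div_mul_cancel₀ _ (gpos _ (hQmem x)).ne'
    rwa [this] at hcomp
  have hderivQ2 : deriv (deriv Q) = fun x => -f (Q x) :=
    funext fun x => (hQderiv2 x).deriv
  -- smoothness
  have hQsmooth : ContDiff ℝ 2 Q := by
    rw [show ((2 : WithTop ℕ∞)) = 1 + 1 by norm_num, contDiff_succ_iff_deriv]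
    refine ⟨fun x => (hQderiv x).differentiableAt, by simp, ?_⟩
    rw [contDiff_one_iff_deriv]
    refine ⟨fun x => (hQderiv2 x).differentiableAt, ?_⟩
    rw [hderivQ2]
    exact (hcf.comp hQcont).neg
  exact ⟨Q, hQsmooth, hQmono, fun x => by rw [hderivQ2]; simp, hQbot, hQtop, hQ0⟩
end

section
/- Let D > 0 and ν > 0. Suppose (ε_n) is a sequence of positive numbers tending to 0, (λ_n) ⊂ ℂ with Re λ_n > −ν for all n, (ψ_n) ⊂ H¹((0,1); ℂ) with ‖ψ_n‖_{L²} = 1, and a_n, b_n, a* : (0,1) → ℝ are measurable with sup_n (‖a_n‖_{L^∞} + ‖b_n‖_{L^∞}) < ∞, ‖a*‖_{L^∞} < ∞, and a*(x) ≤ −2ν for almost every x (so that |a*(x) − λ_n| ≥ ν). Assume the identity λ_n = −D ∫₀¹ |ψ_n'|² dx − ∫₀¹ b_n |ψ_n|² dx + ∫₀¹ ( a_n b_n / (a* − λ_n) ) |ψ_n|² dx + r_n holds with r_n → 0 as n → ∞. Then the sequence (λ_n) is bounded: there exists R > 0, independent of n, with |λ_n| ≤ R for all n. -/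
/-!
Write the identity as `λ_n = -D ∫|ψ_n'|² + ρ_n`. The remainder `ρ_n` is bounded uniformly in `n`:
`|ψ_n|²` is a probability density, the coefficients are uniformly bounded, and the resolvent
factor is controlled by `|a* - λ_n| ≥ Re λ_n - a* ≥ ν`. Since `Re λ_n > -ν`, taking real parts
bounds the nonnegative gradient term by `ν + |ρ_n|`, hence `|λ_n| ≤ ν + 2|ρ_n|`.
-/

open Set Filter MeasureTheory

lemma le_norm_ofReal_sub_of_le_re_sub {t ν : ℝ} {z : ℂ} (h : ν ≤ z.re - t) :
    ν ≤ ‖(t : ℂ) - z‖ :=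
  h.trans (by simpa [norm_sub_rev] using Complex.re_le_norm (z - t))

lemma norm_mul_div_ofReal_sub_le {α β t C ν : ℝ} {z : ℂ} (hν : 0 < ν) (hα : |α| ≤ C)
    (hβ : |β| ≤ C) (h : ν ≤ z.re - t) :
    ‖(α : ℂ) * β / (t - z)‖ ≤ C * C / ν := by
  rw [norm_div, norm_mul, Complex.norm_real, Complex.norm_real]
  exact div_le_div₀ (mul_self_nonneg C) (mul_le_mul hα hβ (abs_nonneg β) ((abs_nonneg α).trans hα))
    hν (le_norm_ofReal_sub_of_le_re_sub h)

lemma norm_integral_mul_ofReal_le_of_integral_eq_one {a b K : ℝ} {f : ℝ → ℂ} {w : ℝ → ℝ}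
    (hab : a ≤ b) (hw0 : ∀ x, 0 ≤ w x) (hw1 : ∫ x in a..b, w x = 1)
    (hf : ∀ᵐ x ∂volume.restrict (Ioo a b), ‖f x‖ ≤ K) :
    ‖∫ x in a..b, f x * (w x : ℂ)‖ ≤ K := by
  have hw : IntervalIntegrable w volume a b :=
    intervalIntegral.intervalIntegrable_of_integral_ne_zero (by rw [hw1]; exact one_ne_zero)
  rw [← mul_one K, ← hw1, ← intervalIntegral.integral_const_mul]
  refine intervalIntegral.norm_integral_le_of_norm_le hab ?_ (hw.const_mul K)
  rw [Measure.restrict_congr_set Ioo_ae_eq_Ioc, ae_restrict_iff' measurableSet_Ioc] at hf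
  filter_upwards [hf] with x hfx hx
  rw [norm_mul, Complex.norm_real, Real.norm_of_nonneg (hw0 x)]
  exact mul_le_mul_of_nonneg_right (hfx hx) (hw0 x)

lemma norm_le_of_eq_neg_ofReal_add {s ν : ℝ} {z ρ : ℂ} (hs : 0 ≤ s) (h : z = -(s : ℂ) + ρ)
    (hre : -ν < z.re) : ‖z‖ ≤ ν + 2 * ‖ρ‖ := by
  have hsν : s ≤ ν + ‖ρ‖ := by
    have hzre : z.re = -s + ρ.re := by simp [h]
    linarith [Complex.re_le_norm ρ]
  calc ‖z‖ ≤ ‖-(s : ℂ)‖ + ‖ρ‖ := h ▸ norm_add_le _ _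
    _ = s + ‖ρ‖ := by rw [norm_neg, Complex.norm_real, Real.norm_of_nonneg hs]
    _ ≤ ν + 2 * ‖ρ‖ := by linarith

theorem eigenvalue_boundedness_general
    (D ν : ℝ) (hD : 0 < D) (hν : 0 < ν)
    (lam : ℕ → ℂ) (hlam : ∀ n, -ν < (lam n).re)
    (ψ : ℕ → ℝ → ℂ)
    (hψnorm : ∀ n, (∫ x in (0:ℝ)..1, ‖ψ n x‖ ^ 2) = 1)
    (a b : ℕ → ℝ → ℝ) (astar : ℝ → ℝ)
    (hbound : ∃ C : ℝ, ∀ n, ∀ x ∈ Ioo (0:ℝ) 1, |a n x| ≤ C ∧ |b n x| ≤ C)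
    (hastarneg : ∀ᵐ x ∂(volume.restrict (Ioo (0:ℝ) 1)), astar x ≤ -2 * ν)
    (r : ℕ → ℂ) (hr : Tendsto r atTop (nhds 0))
    (hidentity : ∀ n, lam n
      = -(D : ℂ) * (∫ x in (0:ℝ)..1, ((‖deriv (ψ n) x‖ ^ 2 : ℝ) : ℂ))
        - (∫ x in (0:ℝ)..1, ((b n x : ℂ) * ((‖ψ n x‖ ^ 2 : ℝ) : ℂ)))
        + (∫ x in (0:ℝ)..1,
            ((a n x : ℂ) * (b n x : ℂ) / ((astar x : ℂ) - lam n))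
              * ((‖ψ n x‖ ^ 2 : ℝ) : ℂ))
        + r n) :
    ∃ R > (0:ℝ), ∀ n, ‖lam n‖ ≤ R := by
  obtain ⟨C, hC⟩ := hbound
  obtain ⟨M, hM⟩ := hr.norm.bddAbove_range
  refine ⟨max 1 (ν + 2 * (C + C * C / ν + M)), lt_max_of_lt_left one_pos,
    fun n => le_max_of_le_right ?_⟩
  have hid := hidentity n
  set Ib := ∫ x in (0:ℝ)..1, (b n x : ℂ) * ((‖ψ n x‖ ^ 2 : ℝ) : ℂ)
  set Ia := ∫ x in (0:ℝ)..1, (a n x : ℂ) * (b n x : ℂ) / ((astar x : ℂ) - lam n)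
      * ((‖ψ n x‖ ^ 2 : ℝ) : ℂ)
  have hIb : ‖Ib‖ ≤ C :=
    norm_integral_mul_ofReal_le_of_integral_eq_one zero_le_one (fun x => sq_nonneg _) (hψnorm n) <|
      ae_restrict_of_forall_mem measurableSet_Ioo fun x hx => by
        simpa only [Complex.norm_real, Real.norm_eq_abs] using (hC n x hx).2
  have hIa : ‖Ia‖ ≤ C * C / ν :=
    norm_integral_mul_ofReal_le_of_integral_eq_one zero_le_one (fun x => sq_nonneg _)
      (hψnorm n) <| by
      filter_upwards [hastarneg, ae_restrict_mem measurableSet_Ioo] with x hx hmem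
      exact norm_mul_div_ofReal_sub_le hν (hC n x hmem).1 (hC n x hmem).2
        (by linarith [hlam n])
  have hgrad : 0 ≤ ∫ x in (0:ℝ)..1, ‖deriv (ψ n) x‖ ^ 2 :=
    intervalIntegral.integral_nonneg zero_le_one fun _ _ => sq_nonneg _
  calc ‖lam n‖ ≤ ν + 2 * ‖-Ib + Ia + r n‖ := by
        refine norm_le_of_eq_neg_ofReal_add (mul_nonneg hD.le hgrad) ?_ (hlam n)
        rw [hid, intervalIntegral.integral_ofReal, Complex.ofReal_mul]
        ring
    _ ≤ ν + 2 * (C + C * C / ν + M) := by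
        gcongr
        refine (norm_add₃_le ..).trans ?_
        rw [norm_neg]
        linarith [hM ⟨n, rfl⟩]

/-- **Boundedness of eigenvalues** (Lemma 3.2 of the paper): if normalized
`H¹` functions `ψ_n` and complex numbers `λ_n` with `Re λ_n > −ν` satisfy
the reduced eigenvalue identity
`λ_n = −D∫₀¹|ψ_n'|² − ∫₀¹ b_n|ψ_n|² + ∫₀¹ (a_n b_n/(a* − λ_n))|ψ_n|² + r_n`
with uniformly bounded coefficients, `a* ≤ −2ν` a.e. and `r_n → 0`, then the
sequence `(λ_n)` is bounded. -/
theorem eigenvalue_boundedness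
    (D ν : ℝ) (hD : 0 < D) (hν : 0 < ν)
    (ε : ℕ → ℝ) (hεpos : ∀ n, 0 < ε n) (hεlim : Tendsto ε atTop (nhds 0))
    (lam : ℕ → ℂ) (hlam : ∀ n, -ν < (lam n).re)
    (ψ : ℕ → ℝ → ℂ)
    (hψcont : ∀ n, ContinuousOn (ψ n) (Icc 0 1))
    (hψdiff : ∀ n, DifferentiableOn ℝ (ψ n) (Ioo 0 1))
    (hψH1 : ∀ n, IntegrableOn (fun x => ‖deriv (ψ n) x‖ ^ 2) (Ioo 0 1))
    (hψnorm : ∀ n, (∫ x in (0:ℝ)..1, ‖ψ n x‖ ^ 2) = 1)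
    (a b : ℕ → ℝ → ℝ) (astar : ℝ → ℝ)
    (hameas : ∀ n, Measurable (a n)) (hbmeas : ∀ n, Measurable (b n))
    (hastarmeas : Measurable astar)
    (hbound : ∃ C : ℝ, ∀ n, ∀ x ∈ Ioo (0:ℝ) 1, |a n x| ≤ C ∧ |b n x| ≤ C)
    (hastarbound : ∃ C : ℝ, ∀ x ∈ Ioo (0:ℝ) 1, |astar x| ≤ C)
    (hastarneg : ∀ᵐ x ∂(volume.restrict (Ioo (0:ℝ) 1)), astar x ≤ -2 * ν)
    (r : ℕ → ℂ) (hr : Tendsto r atTop (nhds 0))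
    (hidentity : ∀ n, lam n
      = -(D : ℂ) * (∫ x in (0:ℝ)..1, ((‖deriv (ψ n) x‖ ^ 2 : ℝ) : ℂ))
        - (∫ x in (0:ℝ)..1, ((b n x : ℂ) * ((‖ψ n x‖ ^ 2 : ℝ) : ℂ)))
        + (∫ x in (0:ℝ)..1,
            ((a n x : ℂ) * (b n x : ℂ) / ((astar x : ℂ) - lam n))
              * ((‖ψ n x‖ ^ 2 : ℝ) : ℂ))
        + r n) :
    ∃ R > (0:ℝ), ∀ n, ‖lam n‖ ≤ R :=
  eigenvalue_boundedness_general D ν hD hν lam hlam ψ hψnorm a b astar hbound hastarneg r hr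
    hidentity
end
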